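/- arXiv:1406.3705 — 9 statements merged into one kernel-verified Lean document; each statement's English description precedes it below -/
import Mathlib

section
/- Whitehead's lemma (finite stable form): Let A be a unital ring and let X, Y be invertible n × n matrices over A. Then the 2n × 2n block diagonal matrix fromBlocks(X·Y·X⁻¹·Y⁻¹, 0; 0, 1) is a product of elementary matrices, i.e. there is a finite list of transvections 1 + c·E_{uv} (u ≠ v, c ∈ A) over the index set Fin n ⊕ Fin n whose product equals fromBlocks(X·Y·X⁻¹·Y⁻¹, 0; 0, 1). -/
/-!
Over any ring, the block matrices `[[1, B], [0, 1]]` and `[[1, 0], [C, 1]]` are products of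
transvections, one per entry, because any product of two of the matrix units involved vanishes.
Three such block matrices give `[[0, M], [-M⁻¹, 0]]`, and two of these antidiagonal matrices
give `diag(M, M⁻¹)`. Finally
`diag(XYX⁻¹Y⁻¹, 1) = diag(X, X⁻¹) · diag(Y, Y⁻¹) · diag(X⁻¹Y⁻¹, YX)`.
-/

open Matrix

theorem Submonoid.one_add_sum_mem_of_mul_eq_zero {R κ : Type*} [Ring R] (S : Submonoid R)
    (s : Finset κ) (f : κ → R) (hmul : ∀ i j, f i * f j = 0) (hmem : ∀ i, 1 + f i ∈ S) :
    1 + ∑ i ∈ s, f i ∈ S := by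
  classical
  induction s using Finset.induction_on with
  | empty => simp [S.one_mem]
  | insert a s ha ih =>
    have hfactor : 1 + ∑ i ∈ insert a s, f i = (1 + f a) * (1 + ∑ i ∈ s, f i) := by
      rw [Finset.sum_insert ha, add_mul, one_mul, mul_add, mul_one, Finset.mul_sum,
        Finset.sum_eq_zero fun i _ => hmul a i]
      abel
    rw [hfactor]
    exact S.mul_mem (hmem a) ih

namespace Matrix

variable {ι m n A : Type*} [Fintype ι] [DecidableEq ι] [Fintype m] [DecidableEq m] [Fintype n]
  [DecidableEq n] [Ring A]

variable (ι A) in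
def elementary : Submonoid (Matrix ι ι A) :=
  Submonoid.closure {M | ∃ (u v : ι) (c : A), u ≠ v ∧ M = 1 + single u v c}

theorem mem_elementary_iff_exists_list {M : Matrix ι ι A} :
    M ∈ elementary ι A ↔ ∃ L : List (Matrix ι ι A),
      (∀ N ∈ L, ∃ (u v : ι) (c : A), u ≠ v ∧ N = 1 + single u v c) ∧ L.prod = M := by
  refine ⟨Submonoid.exists_list_of_mem_closure, ?_⟩
  rintro ⟨L, hL, rfl⟩
  exact Submonoid.list_prod_mem _ fun N hN => Submonoid.subset_closure (hL N hN)

theorem one_add_mem_elementary_of_support (N : Matrix ι ι A) (p : ι → Prop)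
    (hN : ∀ u v, N u v ≠ 0 → p u ∧ ¬ p v) : 1 + N ∈ elementary ι A := by
  rw [matrix_eq_sum_single N, ← Fintype.sum_prod_type']
  refine Submonoid.one_add_sum_mem_of_mul_eq_zero _ _ _ (fun x y => ?_) (fun x => ?_)
  · by_cases hx : N x.1 x.2 = 0
    · simp [hx]
    by_cases hy : N y.1 y.2 = 0
    · simp [hy]
    refine single_mul_single_of_ne _ _ _ _ (fun h => (hN _ _ hx).2 ?_) _
    exact h ▸ (hN _ _ hy).1
  · by_cases hx : N x.1 x.2 = 0
    · simp [hx]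
    have hne : x.1 ≠ x.2 := fun h => (hN _ _ hx).2 (h ▸ (hN _ _ hx).1)
    exact Submonoid.subset_closure ⟨x.1, x.2, _, hne, rfl⟩

theorem fromBlocks_one_upper_mem_elementary (B : Matrix m n A) :
    fromBlocks 1 B 0 1 ∈ elementary (m ⊕ n) A := by
  have hsplit : (fromBlocks 1 B 0 1 : Matrix (m ⊕ n) (m ⊕ n) A) = 1 + fromBlocks 0 B 0 0 := by
    rw [← fromBlocks_one, fromBlocks_add]; simp
  rw [hsplit]
  refine one_add_mem_elementary_of_support _ (·.isLeft) fun u v h => ?_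
  rcases u with i | i <;> rcases v with j | j <;> simp_all

theorem fromBlocks_one_lower_mem_elementary (C : Matrix n m A) :
    fromBlocks 1 0 C 1 ∈ elementary (m ⊕ n) A := by
  have hsplit : (fromBlocks 1 0 C 1 : Matrix (m ⊕ n) (m ⊕ n) A) = 1 + fromBlocks 0 0 C 0 := by
    rw [← fromBlocks_one, fromBlocks_add]; simp
  rw [hsplit]
  refine one_add_mem_elementary_of_support _ (·.isRight) fun u v h => ?_
  rcases u with i | i <;> rcases v with j | j <;> simp_all

theorem fromBlocks_antidiagonal_mem_elementary {M N : Matrix m m A} (hMN : M * N = 1)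
    (hNM : N * M = 1) : fromBlocks 0 M (-N) 0 ∈ elementary (m ⊕ m) A := by
  have h : fromBlocks 1 M 0 1 * fromBlocks 1 0 (-N) 1 * fromBlocks 1 M 0 1 =
      fromBlocks 0 M (-N) 0 := by
    simp [fromBlocks_multiply, hMN, hNM]
  rw [← h]
  exact mul_mem (mul_mem (fromBlocks_one_upper_mem_elementary M)
    (fromBlocks_one_lower_mem_elementary (-N))) (fromBlocks_one_upper_mem_elementary M)

/-- Whitehead's trick: `diag(M, M⁻¹) = [[0, M], [-M⁻¹, 0]] * [[0, -1], [1, 0]]`. -/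
theorem fromBlocks_diagonal_mem_elementary {M N : Matrix m m A} (hMN : M * N = 1)
    (hNM : N * M = 1) : fromBlocks M 0 0 N ∈ elementary (m ⊕ m) A := by
  have h : fromBlocks 0 M (-N) 0 * fromBlocks 0 (-1) (-(-1)) 0 = fromBlocks M 0 0 N := by
    simp [fromBlocks_multiply]
  rw [← h]
  exact mul_mem (fromBlocks_antidiagonal_mem_elementary hMN hNM)
    (fromBlocks_antidiagonal_mem_elementary (by simp) (by simp))

end Matrix

/-- Whitehead's lemma (finite stable form): for invertible `n × n` matrices `X, Y` over a
unital ring `A`, the `2n × 2n` block diagonal matrix `diag(X·Y·X⁻¹·Y⁻¹, 1)` is a product of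
elementary matrices (transvections `1 + c·E_{uv}` with `u ≠ v`). -/
theorem whitehead_lemma_commutator_is_product_of_elementary {A : Type*} [Ring A] (n : ℕ)
    (X Y : Matrix (Fin n) (Fin n) A) [Invertible X] [Invertible Y] :
    ∃ L : List (Matrix (Fin n ⊕ Fin n) (Fin n ⊕ Fin n) A),
      (∀ M ∈ L, ∃ (u v : Fin n ⊕ Fin n) (c : A), u ≠ v ∧
        M = 1 + Matrix.single u v c) ∧
      L.prod = Matrix.fromBlocks (X * Y * ⅟X * ⅟Y) 0 0 1 := by
  have hfactor : fromBlocks (X * Y * ⅟X * ⅟Y) 0 0 1 =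
      fromBlocks X 0 0 (⅟X) * fromBlocks Y 0 0 (⅟Y) * fromBlocks (⅟X * ⅟Y) 0 0 (Y * X) := by
    simp [fromBlocks_multiply, Matrix.mul_assoc]
  rw [← mem_elementary_iff_exists_list, hfactor]
  refine mul_mem (mul_mem ?_ ?_) ?_ <;> apply fromBlocks_diagonal_mem_elementary <;>
    simp [Matrix.mul_assoc]
end

section
/- Let A be a unital ring and let 0 → X → Y → Z → 0 be a short exact sequence of A-modules, i.e. there are A-linear maps f : X → Y injective and g : Y → Z surjective with range f = ker g. If Y and Z are both stably free (and finitely generated), then X is stably free. -/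
/-!
Since `Z ⊕ A^s ≅ A^t`, the module `Z` is a direct summand of a free module, hence projective, so
the sequence splits: `Y ≅ X ⊕ Z`. Then `Y ⊕ A^s ≅ X ⊕ A^t`, and stable freeness is preserved by
adding or cancelling finite free summands.
-/

/-- An `A`-module `M` is *stably free* if `M ⊕ A^s ≅ A^t` for some natural numbers `s, t`. -/
def IsStablyFree (A : Type*) [Ring A] (M : Type*) [AddCommGroup M] [Module A M] : Prop :=
  ∃ s t : ℕ, Nonempty ((M × (Fin s → A)) ≃ₗ[A] (Fin t → A))

noncomputable def LinearEquiv.finAddArrowProd (A : Type*) [Ring A] (a b : ℕ) :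
    (Fin (a + b) → A) ≃ₗ[A] (Fin a → A) × (Fin b → A) :=
  (LinearEquiv.funCongrLeft A A finSumFinEquiv).trans (LinearEquiv.sumArrowLequivProdArrow _ _ A A)

namespace IsStablyFree

variable {A M N : Type*} [Ring A] [AddCommGroup M] [Module A M] [AddCommGroup N] [Module A N]

theorem of_linearEquiv (e : M ≃ₗ[A] N) (h : IsStablyFree A M) : IsStablyFree A N := by
  obtain ⟨s, t, ⟨eM⟩⟩ := h
  exact ⟨s, t, ⟨(e.symm.prodCongr (LinearEquiv.refl A _)).trans eM⟩⟩

theorem prod_pi_fin (h : IsStablyFree A M) (n : ℕ) : IsStablyFree A (M × (Fin n → A)) := by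
  obtain ⟨s, t, ⟨eM⟩⟩ := h
  refine ⟨s, t + n, ⟨?_⟩⟩
  exact LinearEquiv.prodAssoc A M _ _ ≪≫ₗ
    (LinearEquiv.refl A M).prodCongr (LinearEquiv.prodComm A _ _) ≪≫ₗ
    (LinearEquiv.prodAssoc A M _ _).symm ≪≫ₗ
    eM.prodCongr (LinearEquiv.refl A _) ≪≫ₗ
    (LinearEquiv.finAddArrowProd A t n).symm

theorem of_prod_pi_fin {n : ℕ} (h : IsStablyFree A (M × (Fin n → A))) : IsStablyFree A M := by
  obtain ⟨s, t, ⟨e⟩⟩ := h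
  refine ⟨n + s, t, ⟨?_⟩⟩
  exact (LinearEquiv.refl A M).prodCongr (LinearEquiv.finAddArrowProd A n s) ≪≫ₗ
    (LinearEquiv.prodAssoc A M _ _).symm ≪≫ₗ e

theorem projective (h : IsStablyFree A M) : Module.Projective A M := by
  obtain ⟨s, t, ⟨e⟩⟩ := h
  exact Module.Projective.of_split (e.toLinearMap ∘ₗ LinearMap.inl A M _)
    (LinearMap.fst A M _ ∘ₗ e.symm.toLinearMap) (by ext; simp)

end IsStablyFree

theorem Function.Exact.nonempty_linearEquiv_prod_of_projective {A X Y Z : Type*} [Ring A]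
    [AddCommGroup X] [Module A X] [AddCommGroup Y] [Module A Y] [AddCommGroup Z] [Module A Z]
    [Module.Projective A Z] {f : X →ₗ[A] Y} {g : Y →ₗ[A] Z} (hfg : Function.Exact f g)
    (hf : Function.Injective f) (hg : Function.Surjective g) : Nonempty (Y ≃ₗ[A] X × Z) := by
  obtain ⟨l, hl⟩ := Module.projective_lifting_property g LinearMap.id hg
  exact ⟨(hfg.splitSurjectiveEquiv hf ⟨l, hl⟩).1⟩

/-- If `0 → X → Y → Z → 0` is a short exact sequence of `A`-modules and both `Y` and `Z` are
stably free, then so is `X`. -/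
theorem isStablyFree_of_shortExact {A X Y Z : Type*} [Ring A]
    [AddCommGroup X] [Module A X] [AddCommGroup Y] [Module A Y] [AddCommGroup Z] [Module A Z]
    (f : X →ₗ[A] Y) (g : Y →ₗ[A] Z)
    (hf : Function.Injective f) (hg : Function.Surjective g)
    (hfg : LinearMap.range f = LinearMap.ker g)
    (hY : IsStablyFree A Y) (hZ : IsStablyFree A Z) :
    IsStablyFree A X := by
  have := hZ.projective
  obtain ⟨eY⟩ := (LinearMap.exact_iff.mpr hfg.symm).nonempty_linearEquiv_prod_of_projective hf hg
  obtain ⟨s, t, ⟨eZ⟩⟩ := hZ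
  have eYs : (Y × (Fin s → A)) ≃ₗ[A] X × (Fin t → A) :=
    eY.prodCongr (LinearEquiv.refl A _) ≪≫ₗ LinearEquiv.prodAssoc A X Z _ ≪≫ₗ
      (LinearEquiv.refl A X).prodCongr eZ
  exact ((hY.prod_pi_fin s).of_linearEquiv eYs).of_prod_pi_fin
end

section
/- Let C_n → ⋯ → C_0 be an acyclic bounded chain complex of finite-dimensional real inner product spaces, with boundary maps ∂_i : C_i → C_{i−1} (conventions ∂_0 = 0, ∂_{n+1} = 0), and let ∂_i* denote the adjoint of ∂_i. Define the Laplacians Δ_i = ∂_{i+1} ∘ ∂_{i+1}* + ∂_i* ∘ ∂_i : C_i → C_i. Then each Δ_i is invertible (indeed positive definite) and the alternating product of their determinants is trivial: ∏_{i=0}^{n} (det Δ_i)^{(−1)^i} = 1. -/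
/-!
Write `B_i = range ∂_{i+1}`. Exactness gives the orthogonal splitting `C_i = B_i ⊕ (ker ∂_i)ᗮ`,
and `Δ_i` acts as `∂_{i+1} ∂_{i+1}*` on the first summand and as `∂_i* ∂_i` on the second.
Since `∂` restricts to an isomorphism `(ker ∂)ᗮ ≃ range ∂` intertwining `∂* ∂` with `∂ ∂*`, both
pieces have the nonzero determinant `g_i = det (∂_i* ∂_i on (ker ∂_i)ᗮ)`. Hence
`det Δ_i = g_{i+1} g_i`, and the alternating product telescopes to `g_{n+1}^{±1} = 1`.
-/

open LinearMap Submodule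

theorem Finset.prod_range_zpow_neg_one_pow_of_eq_mul {G₀ : Type*} [CommGroupWithZero G₀]
    {f g : ℕ → G₀} (hg : ∀ i, g i ≠ 0) (h0 : f 0 = g 0) (hsucc : ∀ i, f (i + 1) = g (i + 1) * g i)
    (m : ℕ) : ∏ i ∈ Finset.range (m + 1), f i ^ ((-1 : ℤ) ^ i) = g m ^ ((-1 : ℤ) ^ m) := by
  induction m with
  | zero => simp [h0]
  | succ k ih =>
    rw [Finset.prod_range_succ, ih, hsucc, pow_succ, mul_neg_one, zpow_neg, zpow_neg, mul_zpow,
      mul_inv, mul_left_comm, mul_inv_cancel₀ (zpow_ne_zero _ (hg k)), mul_one]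

namespace LinearMap

theorem det_eq_det_of_comp_equiv {R M N : Type*} [CommRing R] [AddCommGroup M] [Module R M]
    [AddCommGroup N] [Module R N] {f : Module.End R M} {g : Module.End R N} (e : M ≃ₗ[R] N)
    (h : g ∘ₗ e.toLinearMap = e.toLinearMap ∘ₗ f) : LinearMap.det g = LinearMap.det f := by
  rw [← det_conj f e, ← comp_assoc, ← h, comp_assoc, e.comp_symm, comp_id]

variable {K M : Type*} [Field K] [AddCommGroup M] [Module K M] [FiniteDimensional K M]

theorem det_eq_det_mul_det_of_isCompl {p q : Submodule K M} (hpq : IsCompl p q)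
    (f : Module.End K M) (g : Module.End K p) (h : Module.End K q)
    (hg : ∀ x : p, f x = g x) (hh : ∀ x : q, f x = h x) :
    LinearMap.det f = LinearMap.det g * LinearMap.det h := by
  rw [← det_prodMap, det_eq_det_of_comp_equiv (prodEquivOfIsCompl p q hpq)]
  ext x <;> simp [hg, hh]

theorem bijective_of_det_ne_zero {f : Module.End K M} (hf : LinearMap.det f ≠ 0) :
    Function.Bijective f :=
  (Module.End.isUnit_iff f).mp ((isUnit_iff_isUnit_det f).mpr hf.isUnit)

section GramPseudoDet

variable {𝕜 E F G : Type*} [RCLike 𝕜]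
  [NormedAddCommGroup E] [InnerProductSpace 𝕜 E] [FiniteDimensional 𝕜 E]
  [NormedAddCommGroup F] [InnerProductSpace 𝕜 F] [FiniteDimensional 𝕜 F]
  [NormedAddCommGroup G] [InnerProductSpace 𝕜 G] [FiniteDimensional 𝕜 G]

theorem adjoint_comp_self_mapsTo_orthogonal_ker (T : E →ₗ[𝕜] F) :
    ∀ x ∈ (ker T)ᗮ, (T.adjoint ∘ₗ T) x ∈ (ker T)ᗮ := by
  rw [orthogonal_ker]
  exact fun x _ => ⟨T x, rfl⟩

theorem self_comp_adjoint_mapsTo_range (T : E →ₗ[𝕜] F) :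
    ∀ x ∈ range T, (T ∘ₗ T.adjoint) x ∈ range T :=
  fun x _ => ⟨T.adjoint x, rfl⟩

/-- The product of the nonzero eigenvalues of `T* T`, i.e. of the squared nonzero singular values
of `T`. -/
noncomputable def gramPseudoDet (T : E →ₗ[𝕜] F) : 𝕜 :=
  LinearMap.det ((T.adjoint ∘ₗ T).restrict T.adjoint_comp_self_mapsTo_orthogonal_ker)

noncomputable def orthogonalKerEquivRange (T : E →ₗ[𝕜] F) : (ker T)ᗮ ≃ₗ[𝕜] range T :=
  (LinearEquiv.ofInjective (T.domRestrict (ker T)ᗮ)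
    (injective_domRestrict_iff.mpr (ker T).orthogonal_disjoint.symm)).trans
    (LinearEquiv.ofEq _ _ (by
      rw [range_domRestrict, orthogonal_ker, ← range_comp, range_self_comp_adjoint]))

theorem det_restrict_self_comp_adjoint_range (T : E →ₗ[𝕜] F) :
    LinearMap.det ((T ∘ₗ T.adjoint).restrict T.self_comp_adjoint_mapsTo_range) =
      T.gramPseudoDet := by
  refine det_eq_det_of_comp_equiv T.orthogonalKerEquivRange ?_
  ext x
  rfl

theorem gramPseudoDet_ne_zero (T : E →ₗ[𝕜] F) : T.gramPseudoDet ≠ 0 := by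
  rw [gramPseudoDet, Ne, det_eq_zero_iff_ker_ne_bot, not_not, eq_bot_iff]
  rintro ⟨x, hx⟩ hTx
  have hx' : x ∈ ker T := by
    rw [← ker_adjoint_comp_self]
    simpa [restrict_apply] using congrArg Subtype.val hTx
  simpa using (ker T).inf_orthogonal_eq_bot.le ⟨hx', hx⟩

theorem gramPseudoDet_of_subsingleton [Subsingleton E] (T : E →ₗ[𝕜] F) :
    T.gramPseudoDet = 1 :=
  det_eq_one_of_subsingleton _

theorem gramPseudoDet_zero : (0 : E →ₗ[𝕜] F).gramPseudoDet = 1 := by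
  have : Subsingleton (ker (0 : E →ₗ[𝕜] F))ᗮ := by
    rw [ker_zero, top_orthogonal_eq_bot]
    infer_instance
  exact det_eq_one_of_subsingleton _

theorem det_laplacian_of_ker_eq_range (S : E →ₗ[𝕜] F) (T : F →ₗ[𝕜] G) (hST : ker T = range S) :
    LinearMap.det (S ∘ₗ S.adjoint + T.adjoint ∘ₗ T) = S.gramPseudoDet * T.gramPseudoDet := by
  have hc : IsCompl (range S) (ker T)ᗮ := by
    rw [hST]
    exact isCompl_orthogonal _
  rw [← det_restrict_self_comp_adjoint_range, gramPseudoDet]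
  refine det_eq_det_mul_det_of_isCompl hc _ _ _ (fun ⟨x, hx⟩ => ?_) (fun ⟨x, hx⟩ => ?_)
  · have hTx : T x = 0 := by rwa [← mem_ker, hST]
    simp [restrict_apply, hTx]
  · have hSx : S.adjoint x = 0 := by rwa [← mem_ker, ← orthogonal_range, ← hST]
    simp [restrict_apply, hSx]

end GramPseudoDet

end LinearMap

theorem alternating_product_of_laplacian_determinants_general (n : ℕ) (C : ℕ → Type*)
    [∀ i, NormedAddCommGroup (C i)] [∀ i, InnerProductSpace ℝ (C i)]
    [∀ i, FiniteDimensional ℝ (C i)]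
    (hbound : ∀ i, n < i → Subsingleton (C i))
    (d : ∀ i : ℕ, C (i + 1) →ₗ[ℝ] C i)
    (hexact0 : LinearMap.range (d 0) = ⊤)
    (hexact : ∀ i, LinearMap.ker (d i) = LinearMap.range (d (i + 1)))
    (Δ : ∀ i : ℕ, C i →ₗ[ℝ] C i)
    (hΔ0 : Δ 0 = d 0 ∘ₗ LinearMap.adjoint (d 0))
    (hΔ : ∀ i, Δ (i + 1) =
      d (i + 1) ∘ₗ LinearMap.adjoint (d (i + 1)) + LinearMap.adjoint (d i) ∘ₗ d i) :
    (∀ i, Function.Bijective (Δ i)) ∧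
    ∏ i ∈ Finset.range (n + 1), (LinearMap.det (Δ i)) ^ ((-1 : ℤ) ^ i) = 1 := by
  -- In degree `0` the missing boundary `∂_0` is the zero map `C 0 → C 0`.
  have hdet0 : LinearMap.det (Δ 0) = (d 0).gramPseudoDet := by
    have := det_laplacian_of_ker_eq_range (d 0) (0 : C 0 →ₗ[ℝ] C 0) (by rw [ker_zero, hexact0])
    rwa [map_zero, comp_zero, add_zero, gramPseudoDet_zero, mul_one, ← hΔ0] at this
  have hdet (i : ℕ) :
      LinearMap.det (Δ (i + 1)) = (d (i + 1)).gramPseudoDet * (d i).gramPseudoDet :=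
    hΔ i ▸ det_laplacian_of_ker_eq_range (d (i + 1)) (d i) (hexact i)
  have hdet_ne_zero : ∀ i, LinearMap.det (Δ i) ≠ 0
    | 0 => hdet0 ▸ (d 0).gramPseudoDet_ne_zero
    | i + 1 => hdet i ▸ mul_ne_zero (d (i + 1)).gramPseudoDet_ne_zero (d i).gramPseudoDet_ne_zero
  refine ⟨fun i => bijective_of_det_ne_zero (hdet_ne_zero i), ?_⟩
  have := hbound (n + 1) n.lt_succ_self
  rw [Finset.prod_range_zpow_neg_one_pow_of_eq_mul (fun i => (d i).gramPseudoDet_ne_zero) hdet0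
    hdet, gramPseudoDet_of_subsingleton, one_zpow]

/-- For an acyclic bounded chain complex of finite-dimensional real inner product spaces
(encoded by spaces `C i` for `i : ℕ`, trivial above degree `n`, with boundaries
`d i : C (i+1) → C i`, so `∂_{i+1} = d i`), the Laplacians
`Δ_i = ∂_{i+1}∘∂_{i+1}* + ∂_i*∘∂_i` are all bijective (invertible) and the alternating
product of their determinants equals `1`. -/
theorem alternating_product_of_laplacian_determinants (n : ℕ) (C : ℕ → Type*)
    [∀ i, NormedAddCommGroup (C i)] [∀ i, InnerProductSpace ℝ (C i)]
    [∀ i, FiniteDimensional ℝ (C i)]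
    (hbound : ∀ i, n < i → Subsingleton (C i))
    (d : ∀ i : ℕ, C (i + 1) →ₗ[ℝ] C i)
    (hdd : ∀ i, (d i) ∘ₗ (d (i + 1)) = 0)
    (hexact0 : LinearMap.range (d 0) = ⊤)
    (hexact : ∀ i, LinearMap.ker (d i) = LinearMap.range (d (i + 1)))
    (Δ : ∀ i : ℕ, C i →ₗ[ℝ] C i)
    (hΔ0 : Δ 0 = d 0 ∘ₗ LinearMap.adjoint (d 0))
    (hΔ : ∀ i, Δ (i + 1) =
      d (i + 1) ∘ₗ LinearMap.adjoint (d (i + 1)) + LinearMap.adjoint (d i) ∘ₗ d i) :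
    (∀ i, Function.Bijective (Δ i)) ∧
    ∏ i ∈ Finset.range (n + 1), (LinearMap.det (Δ i)) ^ ((-1 : ℤ) ^ i) = 1 :=
  alternating_product_of_laplacian_determinants_general n C hbound d hexact0 hexact Δ hΔ0 hΔ
end

section
/- Independence of torsion on the chain contraction: Let C_n → ⋯ → C_0 be a bounded chain complex of finite-dimensional real vector spaces with differential ∂ (∂_i : C_i → C_{i−1}, ∂∘∂ = 0). Let κ be a chain contraction with κ ∘ κ = 0, and let κ̃ be any chain contraction (no condition on κ̃ ∘ κ̃). Then the maps (∂+κ)_{even→odd}, (∂+κ)_{odd→even}, and (∂+κ̃)_{even→odd} are all well defined, (∂+κ)_{odd→even} ∘ (∂+κ)_{even→odd} = id on C_even, and the endomorphism M := (∂+κ)_{odd→even} ∘ (∂+κ̃)_{even→odd} of C_even satisfies det M = 1. In particular (∂+κ̃)_{even→odd} is bijective. -/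
private lemma matrix_det_one_add_of_isNilpotent {m : Type*} [DecidableEq m] [Fintype m]
    (M : Matrix m m ℝ) (hM : IsNilpotent M) : (1 + M).det = 1 := by
  have hu : IsUnit M.charpolyRev := Matrix.isUnit_charpolyRev_of_isNilpotent hM
  obtain ⟨r, hr, hrp⟩ := Polynomial.isUnit_iff.mp hu
  have hr1 : r = 1 := by
    have h0 := Matrix.eval_charpolyRev (M := M)
    rw [← hrp] at h0
    simpa using h0
  have h1 : M.charpolyRev = 1 := by rw [← hrp, hr1, map_one]
  have h2 : Polynomial.eval (-1 : ℝ) M.charpolyRev = 1 := by rw [h1]; simp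
  rw [Matrix.charpolyRev, ← Polynomial.coe_evalRingHom, RingHom.map_det] at h2
  have h3 : (Polynomial.evalRingHom (-1 : ℝ)).mapMatrix
      (1 - (Polynomial.X : Polynomial ℝ) • M.map ⇑Polynomial.C) = 1 + M := by
    ext i j
    rcases eq_or_ne i j with h | h <;>
      simp [h, RingHom.mapMatrix_apply, Matrix.map_apply, Matrix.one_apply, Matrix.sub_apply,
        Matrix.smul_apply, smul_eq_mul]
  rw [h3] at h2
  exact h2

private lemma det_id_add_of_isNilpotent {W : Type*} [AddCommGroup W] [Module ℝ W]
    [FiniteDimensional ℝ W] (f : W →ₗ[ℝ] W) (hf : IsNilpotent f) :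
    LinearMap.det (LinearMap.id + f) = 1 := by
  let b := Module.Free.chooseBasis ℝ W
  rw [← LinearMap.det_toMatrix b]
  have h : LinearMap.toMatrix b b (LinearMap.id + f) = 1 + LinearMap.toMatrix b b f := by
    rw [map_add, LinearMap.toMatrix_id]
  rw [h]
  exact matrix_det_one_add_of_isNilpotent _ ((LinearMap.isNilpotent_toMatrix_iff b f).mpr hf)

/-- Independence of torsion on the chain contraction.  The bounded chain complex
`C_n → ⋯ → C_0` of finite-dimensional real vector spaces is encoded as an internal grading
`Cdeg : ℕ → Submodule ℝ V` of an ambient space `V` (trivial above degree `n`), with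
differential `d` lowering degree by one and vanishing in degree `0`.  If `κ` is a chain
contraction with `κ∘κ = 0` and `κ'` is any chain contraction, then `(∂+κ)_{even→odd}`,
`(∂+κ)_{odd→even}` and `(∂+κ')_{even→odd}` are well defined, the first two are mutually
inverse, and `M = (∂+κ)_{odd→even} ∘ (∂+κ')_{even→odd}` has determinant `1`; in
particular `(∂+κ')_{even→odd}` is bijective. -/
theorem torsion_independent_of_contraction {V : Type*} [AddCommGroup V] [Module ℝ V]
    [FiniteDimensional ℝ V] (n : ℕ) (Cdeg : ℕ → Submodule ℝ V)
    (hinternal : DirectSum.IsInternal Cdeg)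
    (hbound : ∀ i, n < i → Cdeg i = ⊥)
    (d : V →ₗ[ℝ] V)
    (hd0 : ∀ x ∈ Cdeg 0, d x = 0)
    (hddeg : ∀ i, ∀ x ∈ Cdeg (i + 1), d x ∈ Cdeg i)
    (hdd : d ∘ₗ d = 0)
    (κ κ' : V →ₗ[ℝ] V)
    (hκdeg : ∀ i, ∀ x ∈ Cdeg i, κ x ∈ Cdeg (i + 1))
    (hκ : d ∘ₗ κ + κ ∘ₗ d = LinearMap.id)
    (hκκ : κ ∘ₗ κ = 0)
    (hκ'deg : ∀ i, ∀ x ∈ Cdeg i, κ' x ∈ Cdeg (i + 1))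
    (hκ' : d ∘ₗ κ' + κ' ∘ₗ d = LinearMap.id) :
    ∃ (h1 : ∀ x ∈ ⨆ i ∈ {i : ℕ | Even i}, Cdeg i,
        (d + κ) x ∈ ⨆ i ∈ {i : ℕ | ¬ Even i}, Cdeg i)
      (h2 : ∀ x ∈ ⨆ i ∈ {i : ℕ | ¬ Even i}, Cdeg i,
        (d + κ) x ∈ ⨆ i ∈ {i : ℕ | Even i}, Cdeg i)
      (h3 : ∀ x ∈ ⨆ i ∈ {i : ℕ | Even i}, Cdeg i,
        (d + κ') x ∈ ⨆ i ∈ {i : ℕ | ¬ Even i}, Cdeg i),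
      ((d + κ).restrict h2) ∘ₗ ((d + κ).restrict h1) = LinearMap.id ∧
      LinearMap.det (((d + κ).restrict h2) ∘ₗ ((d + κ').restrict h3)) = 1 ∧
      Function.Bijective ((d + κ').restrict h3) := by
  classical
  obtain ⟨Ceven, hCe⟩ : ∃ C : Submodule ℝ V, C = ⨆ i ∈ {i : ℕ | Even i}, Cdeg i := ⟨_, rfl⟩
  obtain ⟨Codd, hCo⟩ : ∃ C : Submodule ℝ V, C = ⨆ i ∈ {i : ℕ | ¬ Even i}, Cdeg i := ⟨_, rfl⟩
  obtain ⟨s, hs⟩ : ∃ s : V →ₗ[ℝ] V, s = κ - κ' := ⟨_, rfl⟩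
  obtain ⟨N, hNdef⟩ : ∃ N : V →ₗ[ℝ] V, N = s ∘ₗ d + κ ∘ₗ κ' := ⟨_, rfl⟩
  rw [← hCe, ← hCo]
  -- membership helpers
  have hmemE : ∀ i, Even i → Cdeg i ≤ Ceven := by
    intro i hi
    rw [hCe]
    exact le_iSup₂ (f := fun i (_ : i ∈ {i : ℕ | Even i}) => Cdeg i) i hi
  have hmemO : ∀ i, ¬ Even i → Cdeg i ≤ Codd := by
    intro i hi
    rw [hCo]
    exact le_iSup₂ (f := fun i (_ : i ∈ {i : ℕ | ¬ Even i}) => Cdeg i) i hi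
  have hdmem : ∀ (P : Submodule ℝ V) i, (∀ j, i = j + 1 → Cdeg j ≤ P) →
      ∀ x ∈ Cdeg i, d x ∈ P := by
    intro P i hP x hx
    cases i with
    | zero => rw [hd0 x hx]; exact P.zero_mem
    | succ j => exact hP j rfl (hddeg j x hx)
  have key : ∀ (f : V →ₗ[ℝ] V), (∀ i, ∀ x ∈ Cdeg i, f x ∈ Cdeg (i + 1)) →
      ∀ x ∈ Ceven, (d + f) x ∈ Codd := by
    intro f hf
    have hle : Ceven ≤ Submodule.comap (d + f) Codd := by
      rw [hCe]
      refine iSup₂_le fun i hi => fun x hx => ?_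
      have hi' : Even i := hi
      simp only [Submodule.mem_comap, LinearMap.add_apply]
      refine Submodule.add_mem _ ?_
        (hmemO (i + 1) (by simp [Nat.even_add_one, hi']) (hf i x hx))
      refine hdmem Codd i (fun j hj => ?_) x hx
      subst hj
      exact hmemO j (by simpa [Nat.even_add_one] using hi')
    exact fun x hx => hle hx
  have key2 : ∀ x ∈ Codd, (d + κ) x ∈ Ceven := by
    have hle : Codd ≤ Submodule.comap (d + κ) Ceven := by
      rw [hCo]
      refine iSup₂_le fun i hi => fun x hx => ?_
      have hi' : ¬ Even i := hi
      simp only [Submodule.mem_comap, LinearMap.add_apply]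
      refine Submodule.add_mem _ ?_
        (hmemE (i + 1) (Nat.even_add_one.mpr hi') (hκdeg i x hx))
      refine hdmem Ceven i (fun j hj => ?_) x hx
      subst hj
      exact hmemE j (by simpa [Nat.even_add_one] using hi')
    exact fun x hx => hle hx
  have h1 : ∀ x ∈ Ceven, (d + κ) x ∈ Codd := key κ hκdeg
  have h2 : ∀ x ∈ Codd, (d + κ) x ∈ Ceven := key2
  have h3 : ∀ x ∈ Ceven, (d + κ') x ∈ Codd := key κ' hκ'deg
  -- operator identities
  have hdκ : d ∘ₗ κ = LinearMap.id - κ ∘ₗ d := eq_sub_of_add_eq hκ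
  have hdκ' : d ∘ₗ κ' = LinearMap.id - κ' ∘ₗ d := eq_sub_of_add_eq hκ'
  have hsq : (d + κ) ∘ₗ (d + κ) = LinearMap.id := by
    rw [LinearMap.add_comp, LinearMap.comp_add, LinearMap.comp_add, hdd, hκκ, hdκ]
    abel
  have hNid : (d + κ) ∘ₗ (d + κ') = LinearMap.id + N := by
    rw [hNdef, hs, LinearMap.add_comp, LinearMap.comp_add, LinearMap.comp_add, hdd, hdκ',
      LinearMap.sub_comp]
    abel
  have hds : d ∘ₗ s = κ' ∘ₗ d - κ ∘ₗ d := by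
    rw [hs, LinearMap.comp_sub, hdκ, hdκ']
    abel
  have hsdsd : (s ∘ₗ d) ∘ₗ (s ∘ₗ d) = 0 := by
    have hassoc : (s ∘ₗ d) ∘ₗ (s ∘ₗ d) = s ∘ₗ ((d ∘ₗ s) ∘ₗ d) := by
      simp only [LinearMap.comp_assoc]
    rw [hassoc, hds]
    simp only [LinearMap.sub_comp, LinearMap.comp_assoc, hdd, LinearMap.comp_zero, sub_self]
  have hNN : N ∘ₗ N = (s ∘ₗ d) ∘ₗ (κ ∘ₗ κ') +
      ((κ ∘ₗ κ') ∘ₗ (s ∘ₗ d) + (κ ∘ₗ κ') ∘ₗ (κ ∘ₗ κ')) := by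
    rw [hNdef, LinearMap.add_comp, LinearMap.comp_add, LinearMap.comp_add, hsdsd]
    abel
  -- degree facts
  have hsdeg : ∀ i, ∀ x ∈ Cdeg i, s x ∈ Cdeg (i + 1) := by
    intro i x hx
    simp only [hs, LinearMap.sub_apply]
    exact sub_mem (hκdeg i x hx) (hκ'deg i x hx)
  have hkk : ∀ i, ∀ x ∈ Cdeg i, κ (κ' x) ∈ Cdeg (i + 2) := fun i x hx =>
    hκdeg (i + 1) _ (hκ'deg i x hx)
  have hsd : ∀ i, ∀ x ∈ Cdeg i, s (d x) ∈ Cdeg i := by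
    intro i x hx
    cases i with
    | zero => rw [hd0 x hx, map_zero]; exact zero_mem _
    | succ j => exact hsdeg j _ (hddeg j x hx)
  -- the filtration T
  obtain ⟨T, hT⟩ : ∃ T : ℕ → Submodule ℝ V, T = fun m => ⨆ j ∈ {j : ℕ | m ≤ j}, Cdeg j :=
    ⟨_, rfl⟩
  have hTmono : ∀ m m', m ≤ m' → T m' ≤ T m := by
    intro m m' h
    simp only [hT]
    exact iSup₂_le fun j hj => le_iSup₂ (f := fun j (_ : j ∈ {j : ℕ | m ≤ j}) => Cdeg j) j (le_trans h hj)
  have hCleT : ∀ i, Cdeg i ≤ T i := by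
    intro i
    simp only [hT]
    exact le_iSup₂ (f := fun j (_ : j ∈ {j : ℕ | i ≤ j}) => Cdeg j) i (le_refl i)
  have hTbot : T (n + 1) = ⊥ := by
    simp only [hT]
    refine le_bot_iff.mp (iSup₂_le fun j hj => ?_)
    exact (hbound j hj).le
  have hTtop : T 0 = ⊤ := by
    simp only [hT]
    have : ∀ j : ℕ, j ∈ {j : ℕ | 0 ≤ j} := fun j => Nat.zero_le j
    simpa [this] using hinternal.submodule_iSup_eq_top
  have hNN2 : ∀ i, ∀ x ∈ Cdeg i, (N ∘ₗ N) x ∈ T (i + 2) := by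
    intro i x hx
    rw [hNN]
    simp only [LinearMap.add_apply, LinearMap.comp_apply]
    refine add_mem (hCleT (i + 2) (hsd (i + 2) _ (hkk i x hx)))
      (add_mem (hCleT (i + 2) (hkk i _ (hsd i x hx))) ?_)
    exact hTmono (i + 2) (i + 4) (by omega) (hCleT (i + 4) (hkk (i + 2) _ (hkk i x hx)))
  have hNNT : ∀ m, ∀ x ∈ T m, (N ∘ₗ N) x ∈ T (m + 2) := by
    intro m
    have hle : T m ≤ Submodule.comap (N ∘ₗ N) (T (m + 2)) := by
      simp only [hT]
      refine iSup₂_le fun j hj => fun x hx => ?_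
      have hj' : m ≤ j := hj
      have hmem2 := hTmono (m + 2) (j + 2) (by omega) (hNN2 j x hx)
      simp only [hT] at hmem2
      exact Submodule.mem_comap.mpr hmem2
    exact fun x hx => hle hx
  have hpow : ∀ k m, ∀ x ∈ T m, ((N ∘ₗ N) ^ k) x ∈ T (m + 2 * k) := by
    intro k
    induction k with
    | zero => intro m x hx; simpa using hx
    | succ k ih =>
      intro m x hx
      have hstep := hNNT m x hx
      have hrec := ih (m + 2) _ hstep
      have heq : ((N ∘ₗ N) ^ (k + 1)) x = ((N ∘ₗ N) ^ k) ((N ∘ₗ N) x) := by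
        rw [pow_succ, Module.End.mul_apply]
      rw [heq]
      have harith : m + 2 + 2 * k = m + 2 * (k + 1) := by omega
      rwa [harith] at hrec
  have hNnil : IsNilpotent N := by
    refine ⟨2 * (n + 1), ?_⟩
    ext x
    have hx : x ∈ T 0 := by rw [hTtop]; trivial
    have hmem := hpow (n + 1) 0 x hx
    have hle : T (0 + 2 * (n + 1)) ≤ T (n + 1) := hTmono _ _ (by omega)
    have hzero : ((N ∘ₗ N) ^ (n + 1)) x = 0 := by
      have hb := hle hmem
      rw [hTbot] at hb
      simpa using hb
    have hpows : N ^ (2 * (n + 1)) = (N ∘ₗ N) ^ (n + 1) := by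
      rw [pow_mul, pow_two, Module.End.mul_eq_comp]
    rw [hpows]
    simpa using hzero
  -- N preserves Ceven
  have hNmem : ∀ x ∈ Ceven, N x ∈ Ceven := by
    have hle : Ceven ≤ Submodule.comap N Ceven := by
      conv_lhs => rw [hCe]
      refine iSup₂_le fun i hi => fun x hx => ?_
      have hi' : Even i := hi
      simp only [Submodule.mem_comap, hNdef, LinearMap.add_apply, LinearMap.comp_apply]
      refine Submodule.add_mem _ (hmemE i hi' (hsd i x hx)) ?_
      exact hmemE (i + 2) (by simpa [Nat.even_add_one, not_not] using hi') (hkk i x hx)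
    exact fun x hx => hle hx
  -- the three conjuncts
  have hcomp1 : ((d + κ).restrict h2) ∘ₗ ((d + κ).restrict h1) = LinearMap.id := by
    refine LinearMap.ext fun x => Subtype.ext ?_
    have hpt := LinearMap.ext_iff.mp hsq x.1
    simp only [LinearMap.comp_apply, LinearMap.id_apply] at hpt
    simpa [LinearMap.restrict_apply] using hpt
  have hcomp2 : ((d + κ).restrict h1) ∘ₗ ((d + κ).restrict h2) = LinearMap.id := by
    refine LinearMap.ext fun x => Subtype.ext ?_
    have hpt := LinearMap.ext_iff.mp hsq x.1
    simp only [LinearMap.comp_apply, LinearMap.id_apply] at hpt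
    simpa [LinearMap.restrict_apply] using hpt
  have hM : ((d + κ).restrict h2) ∘ₗ ((d + κ').restrict h3) =
      LinearMap.id + N.restrict hNmem := by
    refine LinearMap.ext fun x => Subtype.ext ?_
    have hpt := LinearMap.ext_iff.mp hNid x.1
    simp only [LinearMap.comp_apply, LinearMap.add_apply, LinearMap.id_apply] at hpt
    simpa [LinearMap.restrict_apply] using hpt
  have hNEnil : IsNilpotent (N.restrict hNmem) := by
    obtain ⟨k, hk⟩ := hNnil
    refine ⟨k, ?_⟩
    rw [Module.End.pow_restrict]
    refine LinearMap.ext fun x => Subtype.ext ?_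
    simp [LinearMap.restrict_apply, hk]
  have hdet : LinearMap.det (((d + κ).restrict h2) ∘ₗ ((d + κ').restrict h3)) = 1 := by
    rw [hM]
    exact det_id_add_of_isNilpotent _ hNEnil
  have hMbij : Function.Bijective (((d + κ).restrict h2) ∘ₗ ((d + κ').restrict h3)) := by
    rw [hM]
    have hone : LinearMap.id + N.restrict hNmem = 1 + N.restrict hNmem := rfl
    rw [hone]
    exact (Module.End.isUnit_iff _).mp (IsNilpotent.isUnit_one_add hNEnil)
  have hBbij : Function.Bijective ((d + κ).restrict h1) := by
    constructor
    · intro a b hab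
      have ha := LinearMap.ext_iff.mp hcomp1 a
      have hb := LinearMap.ext_iff.mp hcomp1 b
      simp only [LinearMap.comp_apply, LinearMap.id_apply] at ha hb
      rw [← ha, ← hb, hab]
    · intro y
      refine ⟨((d + κ).restrict h2) y, ?_⟩
      have hy := LinearMap.ext_iff.mp hcomp2 y
      simpa only [LinearMap.comp_apply, LinearMap.id_apply] using hy
  have hbij : Function.Bijective ((d + κ').restrict h3) := by
    have hfeq : ⇑((d + κ').restrict h3) =
        ⇑((d + κ).restrict h1) ∘ ⇑(((d + κ).restrict h2) ∘ₗ ((d + κ').restrict h3)) := by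
      funext x
      have hy := LinearMap.ext_iff.mp hcomp2 (((d + κ').restrict h3) x)
      simpa only [LinearMap.comp_apply, LinearMap.id_apply, Function.comp_apply] using hy.symm
    rw [hfeq]
    exact hBbij.comp hMbij
  exact ⟨h1, h2, h3, hcomp1, hdet, hbij⟩
end

section
/- Multiplicativity of torsion for short exact sequences (real case): Let (C'_•, ∂') and (C''_•, ∂'') be acyclic bounded chain complexes of finite-dimensional real vector spaces indexed by 0 ≤ i ≤ n. Let f_i : C''_i → C'_{i−1} be linear maps, set C_i := C'_i × C''_i, and define ∂_i(x, y) := (∂'_i x + f_i y, ∂''_i y); assume ∂ ∘ ∂ = 0 (so C_• is a chain complex, which is then acyclic, and the inclusions C'_i → C_i and projections C_i → C''_i are chain maps forming a degreewise-split short exact sequence). Let κ', κ'', κ be chain contractions of C', C'', C respectively, each satisfying κ∘κ = 0. Then, under the canonical identification C_even ≅ C'_even × C''_even and C_odd ≅ C'_odd × C''_odd, the endomorphism of C_even given by ((∂'+κ')_{odd→even} × (∂''+κ'')_{odd→even}) ∘ (∂+κ)_{even→odd} has determinant of absolute value 1. -/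
/-!
Write `B = (d₁ + k₁) × (d₂ + k₂)`, let `D`, `K` be the differential and contraction of the total
complex, and let `K₀ (x, y) = (k₁ x - k₁ (f (k₂ y)), k₂ y)`. This is a second contraction of `D`,
with `K₀² = 0`, so `D + K₀` is an involution and `B (D + K) = (B (D + K₀)) ((D + K₀) (D + K))`.
The first factor is `1 + N'` with `N' (x, y) = ((d₁ + k₁) (f - k₁ f k₂) y, 0)`, so `N'² = 0`. The
second is `1 + N` with `N = (K₀ - K) D + K₀ K`: here `(K₀ - K) D` preserves degrees and squares
to zero, while `K₀ K` raises degrees by two, so `N²` raises the filtration by degree and `N` is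
nilpotent. Both factors preserve the even part, where they are unipotent, so the determinant is
`1`.
-/

section Ring

variable {A : Type*} [Ring A] {d k k₀ : A}

theorem add_mul_self_eq_one (hd : d * d = 0) (hk : k * k = 0) (hdk : d * k + k * d = 1) :
    (d + k) * (d + k) = 1 :=
  calc (d + k) * (d + k) = d * d + (d * k + k * d) + k * k := by noncomm_ring
    _ = 1 := by rw [hd, hk, hdk, zero_add, add_zero]

theorem add_mul_add_eq_one_add (hd : d * d = 0) (hdk : d * k + k * d = 1) :
    (d + k₀) * (d + k) = 1 + ((k₀ - k) * d + k₀ * k) :=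
  calc (d + k₀) * (d + k) = d * d + (d * k + k * d) + ((k₀ - k) * d + k₀ * k) := by noncomm_ring
    _ = 1 + ((k₀ - k) * d + k₀ * k) := by rw [hd, hdk, zero_add]

theorem mul_mul_eq_self_of_mul_self_eq_zero (hd : d * d = 0) (hdk : d * k + k * d = 1) :
    d * k * d = d :=
  calc d * k * d = (d * k + k * d) * d - k * (d * d) := by noncomm_ring
    _ = d := by rw [hdk, hd, one_mul, mul_zero, sub_zero]

theorem sub_mul_mul_self_eq_zero (hd : d * d = 0) (hdk : d * k + k * d = 1)
    (hdk₀ : d * k₀ + k₀ * d = 1) : (k₀ - k) * d * ((k₀ - k) * d) = 0 :=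
  calc (k₀ - k) * d * ((k₀ - k) * d) = (k₀ - k) * (d * k₀ * d - d * k * d) := by noncomm_ring
    _ = 0 := by
      rw [mul_mul_eq_self_of_mul_self_eq_zero hd hdk, mul_mul_eq_self_of_mul_self_eq_zero hd hdk₀,
        sub_self, mul_zero]

end Ring

theorem LinearMap.det_one_add_of_isNilpotent {R M : Type*} [CommRing R] [IsDomain R]
    [AddCommGroup M] [Module R M] [Module.Free R M] [Module.Finite R M] {N : Module.End R M}
    (hN : IsNilpotent N) : LinearMap.det (1 + N) = 1 := by
  have h := LinearMap.eval_charpoly (-N) 1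
  rw [hN.neg.charpoly_eq_X_pow_finrank] at h
  simpa [sub_neg_eq_add] using h.symm

theorem LinearMap.exists_det_restrict_one_add_comp_one_add_eq_one {K M : Type*} [Field K]
    [AddCommGroup M] [Module K M] [FiniteDimensional K M] {N₁ N₂ : Module.End K M}
    {p : Submodule K M} (hN₁ : ∀ x ∈ p, N₁ x ∈ p) (hN₂ : ∀ x ∈ p, N₂ x ∈ p)
    (hnil₁ : IsNilpotent (N₁.restrict hN₁)) (hnil₂ : IsNilpotent (N₂.restrict hN₂)) :
    ∃ h : ∀ x ∈ p, ((1 + N₂) ∘ₗ (1 + N₁)) x ∈ p,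
      LinearMap.det (((1 + N₂) ∘ₗ (1 + N₁)).restrict h) = 1 := by
  have h₁ : Set.MapsTo (1 + N₁ : Module.End K M) p p := fun x hx => add_mem hx (hN₁ x hx)
  have h₂ : Set.MapsTo (1 + N₂ : Module.End K M) p p := fun x hx => add_mem hx (hN₂ x hx)
  refine ⟨h₂.comp h₁, ?_⟩
  have e₁ : (1 + N₁).restrict h₁ = 1 + N₁.restrict hN₁ := rfl
  have e₂ : (1 + N₂).restrict h₂ = 1 + N₂.restrict hN₂ := rfl
  rw [LinearMap.restrict_comp h₁ h₂, LinearMap.det_comp, e₁, e₂,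
    LinearMap.det_one_add_of_isNilpotent hnil₁, LinearMap.det_one_add_of_isNilpotent hnil₂, one_mul]

theorem LinearMap.isNilpotent_inl_comp_comp_snd {R M₁ M₂ : Type*} [Semiring R] [AddCommMonoid M₁]
    [Module R M₁] [AddCommMonoid M₂] [Module R M₂] (w : M₂ →ₗ[R] M₁) :
    IsNilpotent (LinearMap.inl R M₁ M₂ ∘ₗ w ∘ₗ LinearMap.snd R M₁ M₂) :=
  ⟨2, LinearMap.ext fun v => by simp [sq]⟩

section Grading

variable {R M M' M'' : Type*} [Ring R] [AddCommGroup M] [Module R M] [AddCommGroup M'] [Module R M']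
  [AddCommGroup M''] [Module R M'']

def HasDegree (C : ℤ → Submodule R M) (C' : ℤ → Submodule R M') (s : ℤ) (T : M →ₗ[R] M') :
    Prop :=
  ∀ j, ∀ x ∈ C j, T x ∈ C' (j + s)

namespace HasDegree

variable {C : ℤ → Submodule R M} {C' : ℤ → Submodule R M'} {C'' : ℤ → Submodule R M''}
  {s t : ℤ} {T T₁ T₂ : M →ₗ[R] M'} {T' : M' →ₗ[R] M''}

theorem comp (hT' : HasDegree C' C'' t T') (hT : HasDegree C C' s T) :
    HasDegree C C'' (s + t) (T' ∘ₗ T) := fun j x hx => by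
  rw [← add_assoc]
  exact hT' _ _ (hT j x hx)

theorem add (h₁ : HasDegree C C' s T₁) (h₂ : HasDegree C C' s T₂) :
    HasDegree C C' s (T₁ + T₂) := fun j x hx => add_mem (h₁ j x hx) (h₂ j x hx)

theorem sub (h₁ : HasDegree C C' s T₁) (h₂ : HasDegree C C' s T₂) :
    HasDegree C C' s (T₁ - T₂) := fun j x hx => sub_mem (h₁ j x hx) (h₂ j x hx)

theorem mono (hC' : Antitone C') (h : HasDegree C C' s T) (hts : t ≤ s) : HasDegree C C' t T :=
  fun j x hx => hC' (by omega) (h j x hx)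

theorem pow {N : Module.End R M} (h : HasDegree C C s N) (m : ℕ) :
    HasDegree C C (m * s) (N ^ m) := by
  induction m with
  | zero => intro j x hx; simpa using hx
  | succ m ih =>
    rw [pow_succ', Module.End.mul_eq_comp]
    convert h.comp ih using 1
    push_cast; ring

end HasDegree

def toIntGrading (C : ℕ → Submodule R M) : ℤ → Submodule R M
  | (n : ℕ) => C n
  | .negSucc _ => ⊥

@[simp]
theorem toIntGrading_natCast (C : ℕ → Submodule R M) (n : ℕ) : toIntGrading C n = C n := rfl

@[simp]
theorem toIntGrading_negSucc (C : ℕ → Submodule R M) (n : ℕ) :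
    toIntGrading C (.negSucc n) = ⊥ := rfl

variable {C : ℕ → Submodule R M} {C' : ℕ → Submodule R M'} {T : M →ₗ[R] M'}

theorem hasDegree_one_toIntGrading (h : ∀ i, ∀ x ∈ C i, T x ∈ C' (i + 1)) :
    HasDegree (toIntGrading C) (toIntGrading C') 1 T := by
  rintro (i | i) x hx
  · exact h i x hx
  · rw [toIntGrading_negSucc, Submodule.mem_bot] at hx
    simp [hx]

theorem hasDegree_neg_one_toIntGrading (h₀ : ∀ x ∈ C 0, T x = 0)
    (h : ∀ i, ∀ x ∈ C (i + 1), T x ∈ C' i) :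
    HasDegree (toIntGrading C) (toIntGrading C') (-1) T := by
  rintro ((_ | i) | i) x hx
  · simp [h₀ x hx]
  · rw [show Int.ofNat (i + 1) + -1 = (i : ℤ) by rw [Int.ofNat_eq_natCast]; omega]
    exact h i x hx
  · rw [toIntGrading_negSucc, Submodule.mem_bot] at hx
    simp [hx]

def evenPart (C : ℕ → Submodule R M) : Submodule R M :=
  ⨆ i ∈ {i : ℕ | Even i}, C i

theorem HasDegree.mapsTo_evenPart {s : ℤ} (h : HasDegree (toIntGrading C) (toIntGrading C') s T)
    (hs : Even s) :
    ∀ x ∈ evenPart C, T x ∈ evenPart C' := by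
  suffices evenPart C ≤ (evenPart C').comap T from fun x hx => this hx
  refine iSup₂_le fun i hi x hx => ?_
  have hTx := h i x hx
  rcases hj : (i : ℤ) + s with m | m
  · rw [hj] at hTx
    have hm : Even m := by
      rw [← Int.even_coe_nat, ← Int.ofNat_eq_natCast, ← hj]
      exact (Int.even_coe_nat i |>.2 hi).add hs
    exact le_biSup C' hm hTx
  · rw [hj, toIntGrading_negSucc, Submodule.mem_bot] at hTx
    simp [hTx]

theorem evenPart_prod (C : ℕ → Submodule R M) (C' : ℕ → Submodule R M') :
    evenPart (fun i => (C i).prod (C' i)) = (evenPart C).prod (evenPart C') := by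
  refine le_antisymm (iSup₂_le fun i hi => Submodule.prod_mono (le_biSup C hi) (le_biSup C' hi))
    ((Submodule.prod_le_iff ..).2 ⟨Submodule.map_le_iff_le_comap.2 (iSup₂_le fun i hi x hx => ?_),
      Submodule.map_le_iff_le_comap.2 (iSup₂_le fun i hi y hy => ?_)⟩)
  · exact le_biSup (fun i => (C i).prod (C' i)) hi ⟨hx, zero_mem _⟩
  · exact le_biSup (fun i => (C i).prod (C' i)) hi ⟨zero_mem _, hy⟩

def filtration (C : ℤ → Submodule R M) (k : ℤ) : Submodule R M :=
  ⨆ j, ⨆ (_ : k ≤ j), C j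

theorem filtration_antitone (C : ℤ → Submodule R M) : Antitone (filtration C) :=
  fun _ _ hkl => iSup₂_mono' fun j hj => ⟨j, hkl.trans hj, le_rfl⟩

theorem HasDegree.filtration {C : ℤ → Submodule R M} {C' : ℤ → Submodule R M'} {s : ℤ}
    (h : HasDegree C C' s T) : HasDegree (_root_.filtration C) (_root_.filtration C') s T := by
  intro k x hx
  suffices _root_.filtration C k ≤ (_root_.filtration C' (k + s)).comap T from this hx
  exact iSup₂_le fun j hj y hy =>
    le_iSup₂ (f := fun j (_ : k + s ≤ j) => C' j) (j + s) (by omega) (h j y hy)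

theorem evenPart_le_filtration_zero : evenPart C ≤ filtration (toIntGrading C) 0 :=
  iSup₂_le fun i _ => le_iSup₂_of_le (f := fun j (_ : 0 ≤ j) => toIntGrading C j) (i : ℤ)
    (Int.natCast_nonneg i) le_rfl

theorem filtration_toIntGrading_eq_bot {n : ℕ} (hb : ∀ i, n < i → C i = ⊥) {k : ℤ} (hk : n < k) :
    filtration (toIntGrading C) k = ⊥ := by
  refine eq_bot_iff.2 (iSup₂_le fun j hj => ?_)
  lift j to ℕ using by omega
  rw [toIntGrading_natCast, hb j (by omega)]

theorem pow_apply_eq_zero_of_hasDegree_filtration {n : ℕ} (hb : ∀ i, n < i → C i = ⊥)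
    {N : Module.End R M}
    (hN : HasDegree (filtration (toIntGrading C)) (filtration (toIntGrading C)) 1 N) {x : M}
    (hx : x ∈ filtration (toIntGrading C) 0) : (N ^ (n + 1)) x = 0 := by
  have := hN.pow (n + 1) 0 x hx
  rwa [filtration_toIntGrading_eq_bot hb (by push_cast; omega), Submodule.mem_bot] at this

end Grading

section Comparison

variable {R M : Type*} [Ring R] [AddCommGroup M] [Module R M] {C : ℕ → Submodule R M}
  {D K K₀ : Module.End R M}

theorem mapsTo_evenPart_sub_mul_add_mul
    (hD : HasDegree (toIntGrading C) (toIntGrading C) (-1) D)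
    (hK : HasDegree (toIntGrading C) (toIntGrading C) 1 K)
    (hK₀ : HasDegree (toIntGrading C) (toIntGrading C) 1 K₀) :
    ∀ x ∈ evenPart C, ((K₀ - K) * D + K₀ * K) x ∈ evenPart C := fun x hx =>
  add_mem (((hK₀.sub hK).comp hD).mapsTo_evenPart (by decide) x hx)
    ((hK₀.comp hK).mapsTo_evenPart (by decide) x hx)

theorem isNilpotent_restrict_sub_mul_add_mul {n : ℕ} (hb : ∀ i, n < i → C i = ⊥)
    (hD : HasDegree (toIntGrading C) (toIntGrading C) (-1) D)
    (hK : HasDegree (toIntGrading C) (toIntGrading C) 1 K)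
    (hK₀ : HasDegree (toIntGrading C) (toIntGrading C) 1 K₀) (hDD : D * D = 0)
    (hDK : D * K + K * D = 1) (hDK₀ : D * K₀ + K₀ * D = 1) {p : Submodule R M}
    (hp : p ≤ filtration (toIntGrading C) 0) (hL : ∀ x ∈ p, ((K₀ - K) * D + K₀ * K) x ∈ p) :
    IsNilpotent (((K₀ - K) * D + K₀ * K).restrict hL) := by
  have hS := ((hK₀.sub hK).comp hD).filtration
  have hT := (hK₀.comp hK).filtration
  have hanti := filtration_antitone (toIntGrading C)
  have hsq : ((K₀ - K) * D + K₀ * K) ^ 2 =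
      (K₀ - K) * D * (K₀ * K) + K₀ * K * ((K₀ - K) * D) + K₀ * K * (K₀ * K) := by
    rw [sq, add_mul, mul_add, mul_add, sub_mul_mul_self_eq_zero hDD hDK hDK₀]
    abel
  have hdeg : HasDegree (filtration (toIntGrading C)) (filtration (toIntGrading C)) 1
      (((K₀ - K) * D + K₀ * K) ^ 2) := by
    rw [hsq]
    exact (((hS.comp hT).mono hanti (by norm_num)).add
      ((hT.comp hS).mono hanti (by norm_num))).add ((hT.comp hT).mono hanti (by norm_num))
  refine ⟨2 * (n + 1), LinearMap.ext fun x => Subtype.ext ?_⟩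
  rw [Module.End.pow_restrict, LinearMap.coe_restrict_apply, pow_mul]
  exact pow_apply_eq_zero_of_hasDegree_filtration hb hdeg (hp x.2)

end Comparison

section Twisted

variable {R M₁ M₂ : Type*} [Ring R] [AddCommGroup M₁] [Module R M₁] [AddCommGroup M₂]
  [Module R M₂] {d₁ k₁ : Module.End R M₁} {d₂ k₂ : Module.End R M₂} {f : M₂ →ₗ[R] M₁}

variable (d₁ d₂ f) in
def twistedDifferential : Module.End R (M₁ × M₂) :=
  d₁.prodMap d₂ + LinearMap.inl R M₁ M₂ ∘ₗ f ∘ₗ LinearMap.snd R M₁ M₂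

variable (k₁ k₂ f) in
def triangularContraction : Module.End R (M₁ × M₂) :=
  k₁.prodMap k₂ - LinearMap.inl R M₁ M₂ ∘ₗ k₁ ∘ₗ f ∘ₗ k₂ ∘ₗ LinearMap.snd R M₁ M₂

@[simp]
theorem twistedDifferential_apply (x : M₁) (y : M₂) :
    twistedDifferential d₁ d₂ f (x, y) = (d₁ x + f y, d₂ y) := by
  simp [twistedDifferential]

@[simp]
theorem triangularContraction_apply (x : M₁) (y : M₂) :
    triangularContraction k₁ k₂ f (x, y) = (k₁ x - k₁ (f (k₂ y)), k₂ y) := by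
  simp [triangularContraction]

theorem comp_add_comp_eq_zero_of_twistedDifferential_mul_self
    (h : twistedDifferential d₁ d₂ f * twistedDifferential d₁ d₂ f = 0) :
    d₁ ∘ₗ f + f ∘ₗ d₂ = 0 :=
  LinearMap.ext fun y => by simpa using congr(($h (0, y)).1)

theorem twistedDifferential_mul_triangularContraction_add (hk₁ : d₁ * k₁ + k₁ * d₁ = 1)
    (hk₂ : d₂ * k₂ + k₂ * d₂ = 1) (hf : d₁ ∘ₗ f + f ∘ₗ d₂ = 0) :
    twistedDifferential d₁ d₂ f * triangularContraction k₁ k₂ f +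
      triangularContraction k₁ k₂ f * twistedDifferential d₁ d₂ f = 1 := by
  have hk₁' x : d₁ (k₁ x) + k₁ (d₁ x) = x := congr($hk₁ x)
  have hk₂' y : d₂ (k₂ y) + k₂ (d₂ y) = y := congr($hk₂ y)
  refine LinearMap.ext fun ⟨x, y⟩ => Prod.ext ?_ (by simpa using hk₂' y)
  have e₁ : k₁ (d₁ (f (k₂ y))) + k₁ (f (d₂ (k₂ y))) = 0 := by
    simpa using congr(k₁ ($hf (k₂ y)))
  have e₂ : k₁ (f (d₂ (k₂ y))) + k₁ (f (k₂ (d₂ y))) = k₁ (f y) := by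
    rw [← map_add, ← map_add, hk₂' y]
  simp only [LinearMap.add_apply, Module.End.mul_apply, twistedDifferential_apply,
    triangularContraction_apply, Module.End.one_apply, Prod.fst_add, map_add, map_sub]
  linear_combination (norm := module) hk₁' x - hk₁' (f (k₂ y)) + e₁ - e₂

theorem triangularContraction_mul_self (hk₁ : k₁ * k₁ = 0) (hk₂ : k₂ * k₂ = 0) :
    triangularContraction k₁ k₂ f * triangularContraction k₁ k₂ f = 0 := by
  have hk₁' x : k₁ (k₁ x) = 0 := congr($hk₁ x)
  have hk₂' y : k₂ (k₂ y) = 0 := congr($hk₂ y)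
  refine LinearMap.ext fun ⟨x, y⟩ => ?_
  simp [hk₁', hk₂']

theorem prodMap_mul_twistedDifferential_add_triangularContraction (hd₁ : d₁ * d₁ = 0)
    (hk₁ : k₁ * k₁ = 0) (hdk₁ : d₁ * k₁ + k₁ * d₁ = 1) (hd₂ : d₂ * d₂ = 0) (hk₂ : k₂ * k₂ = 0)
    (hdk₂ : d₂ * k₂ + k₂ * d₂ = 1) :
    (d₁ + k₁).prodMap (d₂ + k₂) * (twistedDifferential d₁ d₂ f + triangularContraction k₁ k₂ f) =
      1 + LinearMap.inl R M₁ M₂ ∘ₗ ((d₁ + k₁) ∘ₗ (f - k₁ ∘ₗ f ∘ₗ k₂)) ∘ₗ LinearMap.snd R M₁ M₂ := by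
  have h₁ x : (d₁ + k₁) ((d₁ + k₁) x) = x := congr($(add_mul_self_eq_one hd₁ hk₁ hdk₁) x)
  have h₂ y : (d₂ + k₂) ((d₂ + k₂) y) = y := congr($(add_mul_self_eq_one hd₂ hk₂ hdk₂) y)
  refine LinearMap.ext fun ⟨x, y⟩ => ?_
  have : (twistedDifferential d₁ d₂ f + triangularContraction k₁ k₂ f) (x, y) =
      ((d₁ + k₁) x + (f - k₁ ∘ₗ f ∘ₗ k₂) y, (d₂ + k₂) y) := by
    simp; abel
  rw [Module.End.mul_apply, this, LinearMap.prodMap_apply, map_add, h₁, h₂]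
  simp

theorem prodMap_comp_twistedDifferential_add_eq (hd₁ : d₁ * d₁ = 0) (hk₁ : k₁ * k₁ = 0)
    (hdk₁ : d₁ * k₁ + k₁ * d₁ = 1) (hd₂ : d₂ * d₂ = 0) (hk₂ : k₂ * k₂ = 0)
    (hdk₂ : d₂ * k₂ + k₂ * d₂ = 1)
    (hD : twistedDifferential d₁ d₂ f * twistedDifferential d₁ d₂ f = 0)
    {K : Module.End R (M₁ × M₂)}
    (hK : twistedDifferential d₁ d₂ f * K + K * twistedDifferential d₁ d₂ f = 1) :
    (d₁ + k₁).prodMap (d₂ + k₂) ∘ₗ (twistedDifferential d₁ d₂ f + K) =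
      (1 + LinearMap.inl R M₁ M₂ ∘ₗ ((d₁ + k₁) ∘ₗ (f - k₁ ∘ₗ f ∘ₗ k₂)) ∘ₗ LinearMap.snd R M₁ M₂) ∘ₗ
        (1 + ((triangularContraction k₁ k₂ f - K) * twistedDifferential d₁ d₂ f +
          triangularContraction k₁ k₂ f * K)) := by
  set D := twistedDifferential d₁ d₂ f
  set K₀ := triangularContraction k₁ k₂ f
  have hDK₀ : D * K₀ + K₀ * D = 1 := twistedDifferential_mul_triangularContraction_add hdk₁ hdk₂
    (comp_add_comp_eq_zero_of_twistedDifferential_mul_self hD)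
  have hA₀ : (D + K₀) * (D + K₀) = 1 :=
    add_mul_self_eq_one hD (triangularContraction_mul_self hk₁ hk₂) hDK₀
  calc (d₁ + k₁).prodMap (d₂ + k₂) * (D + K)
      = (d₁ + k₁).prodMap (d₂ + k₂) * (D + K₀) * ((D + K₀) * (D + K)) := by
        rw [mul_assoc, ← mul_assoc (D + K₀), hA₀, one_mul]
    _ = _ := by
        rw [prodMap_mul_twistedDifferential_add_triangularContraction hd₁ hk₁ hdk₁ hd₂ hk₂ hdk₂,
          add_mul_add_eq_one_add hD hK]
        rfl

end Twisted

section GradedTwisted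

variable {R M₁ M₂ : Type*} [Ring R] [AddCommGroup M₁] [Module R M₁] [AddCommGroup M₂]
  [Module R M₂] {d₁ k₁ : Module.End R M₁} {d₂ k₂ : Module.End R M₂} {f : M₂ →ₗ[R] M₁}
  {C₁ : ℕ → Submodule R M₁} {C₂ : ℕ → Submodule R M₂}

theorem hasDegree_twistedDifferential (hd₁₀ : ∀ x ∈ C₁ 0, d₁ x = 0)
    (hd₁ : ∀ i, ∀ x ∈ C₁ (i + 1), d₁ x ∈ C₁ i) (hd₂₀ : ∀ y ∈ C₂ 0, d₂ y = 0)
    (hd₂ : ∀ i, ∀ y ∈ C₂ (i + 1), d₂ y ∈ C₂ i) (hf₀ : ∀ y ∈ C₂ 0, f y = 0)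
    (hf : ∀ i, ∀ y ∈ C₂ (i + 1), f y ∈ C₁ i) :
    HasDegree (toIntGrading fun i => (C₁ i).prod (C₂ i))
      (toIntGrading fun i => (C₁ i).prod (C₂ i)) (-1) (twistedDifferential d₁ d₂ f) := by
  refine hasDegree_neg_one_toIntGrading (fun ⟨x, y⟩ ⟨hx, hy⟩ => ?_) fun i ⟨x, y⟩ ⟨hx, hy⟩ => ?_
  · simp [hd₁₀ x hx, hf₀ y hy, hd₂₀ y hy]
  · rw [twistedDifferential_apply]
    exact ⟨add_mem (hd₁ i x hx) (hf i y hy), hd₂ i y hy⟩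

theorem hasDegree_triangularContraction (hk₁ : ∀ i, ∀ x ∈ C₁ i, k₁ x ∈ C₁ (i + 1))
    (hk₂ : ∀ i, ∀ y ∈ C₂ i, k₂ y ∈ C₂ (i + 1)) (hf : ∀ i, ∀ y ∈ C₂ (i + 1), f y ∈ C₁ i) :
    HasDegree (toIntGrading fun i => (C₁ i).prod (C₂ i))
      (toIntGrading fun i => (C₁ i).prod (C₂ i)) 1 (triangularContraction k₁ k₂ f) := by
  refine hasDegree_one_toIntGrading fun i ⟨x, y⟩ ⟨hx, hy⟩ => ?_
  rw [triangularContraction_apply]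
  exact ⟨sub_mem (hk₁ i x hx) (hk₁ i _ (hf i _ (hk₂ i y hy))), hk₂ i y hy⟩

theorem mapsTo_prod_evenPart_inl_comp_comp_snd
    (hd₁ : HasDegree (toIntGrading C₁) (toIntGrading C₁) (-1) d₁)
    (hk₁ : HasDegree (toIntGrading C₁) (toIntGrading C₁) 1 k₁)
    (hk₂ : HasDegree (toIntGrading C₂) (toIntGrading C₂) 1 k₂)
    (hf : HasDegree (toIntGrading C₂) (toIntGrading C₁) (-1) f) :
    ∀ v ∈ (evenPart C₁).prod (evenPart C₂),
      (LinearMap.inl R M₁ M₂ ∘ₗ ((d₁ + k₁) ∘ₗ (f - k₁ ∘ₗ f ∘ₗ k₂)) ∘ₗ LinearMap.snd R M₁ M₂) v ∈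
        (evenPart C₁).prod (evenPart C₂) := by
  rintro ⟨x, y⟩ ⟨-, hy⟩
  have hg := hk₁.comp (hf.comp hk₂)
  refine ⟨?_, zero_mem _⟩
  change (d₁ + k₁) ((f - k₁ ∘ₗ f ∘ₗ k₂) y) ∈ evenPart C₁
  rw [LinearMap.add_apply, LinearMap.sub_apply, map_sub, map_sub]
  exact add_mem (sub_mem ((hd₁.comp hf).mapsTo_evenPart (by decide) y hy)
      ((hd₁.comp hg).mapsTo_evenPart (by decide) y hy))
    (sub_mem ((hk₁.comp hf).mapsTo_evenPart (by decide) y hy)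
      ((hk₁.comp hg).mapsTo_evenPart (by decide) y hy))

end GradedTwisted

theorem torsion_multiplicative_ses_general {V₁ V₂ : Type*}
    [AddCommGroup V₁] [Module ℝ V₁] [FiniteDimensional ℝ V₁]
    [AddCommGroup V₂] [Module ℝ V₂] [FiniteDimensional ℝ V₂]
    (n : ℕ) (C₁ : ℕ → Submodule ℝ V₁) (C₂ : ℕ → Submodule ℝ V₂)
    (hb₁ : ∀ i, n < i → C₁ i = ⊥) (hb₂ : ∀ i, n < i → C₂ i = ⊥)
    (d₁ : V₁ →ₗ[ℝ] V₁) (d₂ : V₂ →ₗ[ℝ] V₂)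
    (hd₁0 : ∀ x ∈ C₁ 0, d₁ x = 0) (hd₁deg : ∀ i, ∀ x ∈ C₁ (i + 1), d₁ x ∈ C₁ i)
    (hd₁d₁ : d₁ ∘ₗ d₁ = 0)
    (hd₂0 : ∀ x ∈ C₂ 0, d₂ x = 0) (hd₂deg : ∀ i, ∀ x ∈ C₂ (i + 1), d₂ x ∈ C₂ i)
    (hd₂d₂ : d₂ ∘ₗ d₂ = 0)
    (f : V₂ →ₗ[ℝ] V₁)
    (hf0 : ∀ x ∈ C₂ 0, f x = 0) (hfdeg : ∀ i, ∀ x ∈ C₂ (i + 1), f x ∈ C₁ i)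
    (D : V₁ × V₂ →ₗ[ℝ] V₁ × V₂)
    (hD : ∀ x y, D (x, y) = (d₁ x + f y, d₂ y))
    (hDD : D ∘ₗ D = 0)
    (k₁ : V₁ →ₗ[ℝ] V₁) (k₂ : V₂ →ₗ[ℝ] V₂)
    (hk₁deg : ∀ i, ∀ x ∈ C₁ i, k₁ x ∈ C₁ (i + 1))
    (hk₁ : d₁ ∘ₗ k₁ + k₁ ∘ₗ d₁ = LinearMap.id) (hk₁k₁ : k₁ ∘ₗ k₁ = 0)
    (hk₂deg : ∀ i, ∀ x ∈ C₂ i, k₂ x ∈ C₂ (i + 1))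
    (hk₂ : d₂ ∘ₗ k₂ + k₂ ∘ₗ d₂ = LinearMap.id) (hk₂k₂ : k₂ ∘ₗ k₂ = 0)
    (K : V₁ × V₂ →ₗ[ℝ] V₁ × V₂)
    (hKdeg : ∀ i, ∀ v ∈ (C₁ i).prod (C₂ i), K v ∈ (C₁ (i + 1)).prod (C₂ (i + 1)))
    (hK : D ∘ₗ K + K ∘ₗ D = LinearMap.id) :
    ∃ (h : ∀ v ∈ (⨆ i ∈ {i : ℕ | Even i}, C₁ i).prod (⨆ i ∈ {i : ℕ | Even i}, C₂ i),
        (LinearMap.prodMap (d₁ + k₁) (d₂ + k₂) ∘ₗ (D + K)) v ∈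
          (⨆ i ∈ {i : ℕ | Even i}, C₁ i).prod (⨆ i ∈ {i : ℕ | Even i}, C₂ i)),
      |LinearMap.det ((LinearMap.prodMap (d₁ + k₁) (d₂ + k₂) ∘ₗ (D + K)).restrict h)|
        = 1 := by
  obtain rfl : D = twistedDifferential d₁ d₂ f :=
    LinearMap.ext fun ⟨x, y⟩ => by rw [hD, twistedDifferential_apply]
  have hDK₀ := twistedDifferential_mul_triangularContraction_add hk₁ hk₂
    (comp_add_comp_eq_zero_of_twistedDifferential_mul_self hDD)
  have hD' := hasDegree_twistedDifferential hd₁0 hd₁deg hd₂0 hd₂deg hf0 hfdeg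
  have hK' := hasDegree_one_toIntGrading (C := fun i => (C₁ i).prod (C₂ i))
    (C' := fun i => (C₁ i).prod (C₂ i)) hKdeg
  have hK₀ := hasDegree_triangularContraction hk₁deg hk₂deg hfdeg
  have hN := evenPart_prod C₁ C₂ ▸ mapsTo_evenPart_sub_mul_add_mul hD' hK' hK₀
  have hN' := mapsTo_prod_evenPart_inl_comp_comp_snd (hasDegree_neg_one_toIntGrading hd₁0 hd₁deg)
    (hasDegree_one_toIntGrading hk₁deg) (hasDegree_one_toIntGrading hk₂deg)
    (hasDegree_neg_one_toIntGrading hf0 hfdeg)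
  have hnil := isNilpotent_restrict_sub_mul_add_mul (n := n)
    (fun i hi => by simp [hb₁ i hi, hb₂ i hi])
    hD' hK' hK₀ hDD hK hDK₀ (evenPart_prod C₁ C₂ ▸ evenPart_le_filtration_zero) hN
  rw [prodMap_comp_twistedDifferential_add_eq hd₁d₁ hk₁k₁ hk₁ hd₂d₂ hk₂k₂ hk₂ hDD hK]
  obtain ⟨h, hdet⟩ := LinearMap.exists_det_restrict_one_add_comp_one_add_eq_one hN hN' hnil
    (Module.End.isNilpotent.restrict hN' (LinearMap.isNilpotent_inl_comp_comp_snd _))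
  exact ⟨h, (congrArg abs hdet).trans abs_one⟩

/-- Multiplicativity of torsion for degreewise-split short exact sequences (real case).
The acyclic bounded complexes `C'` and `C''` are encoded as internal gradings
`C₁ : ℕ → Submodule ℝ V₁`, `C₂ : ℕ → Submodule ℝ V₂` of ambient spaces (trivial above
degree `n`), with differentials `d₁, d₂` lowering degree by one; acyclicity reads
`ker d = range d`.  Given a degree-lowering map `f : C'' → C'[-1]`, the product complex
has differential `D(x, y) = (d₁ x + f y, d₂ y)`, assumed to square to zero.  Given chain
contractions `k₁, k₂, K` of the three complexes, each squaring to zero, the endomorphism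
`((∂'+κ')_{odd→even} × (∂''+κ'')_{odd→even}) ∘ (∂+κ)_{even→odd}` of
`C_even ≅ C'_even × C''_even` has determinant of absolute value `1`. -/
theorem torsion_multiplicative_ses {V₁ V₂ : Type*}
    [AddCommGroup V₁] [Module ℝ V₁] [FiniteDimensional ℝ V₁]
    [AddCommGroup V₂] [Module ℝ V₂] [FiniteDimensional ℝ V₂]
    (n : ℕ) (C₁ : ℕ → Submodule ℝ V₁) (C₂ : ℕ → Submodule ℝ V₂)
    (hint₁ : DirectSum.IsInternal C₁) (hint₂ : DirectSum.IsInternal C₂)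
    (hb₁ : ∀ i, n < i → C₁ i = ⊥) (hb₂ : ∀ i, n < i → C₂ i = ⊥)
    (d₁ : V₁ →ₗ[ℝ] V₁) (d₂ : V₂ →ₗ[ℝ] V₂)
    (hd₁0 : ∀ x ∈ C₁ 0, d₁ x = 0) (hd₁deg : ∀ i, ∀ x ∈ C₁ (i + 1), d₁ x ∈ C₁ i)
    (hd₁d₁ : d₁ ∘ₗ d₁ = 0) (hacyc₁ : LinearMap.ker d₁ = LinearMap.range d₁)
    (hd₂0 : ∀ x ∈ C₂ 0, d₂ x = 0) (hd₂deg : ∀ i, ∀ x ∈ C₂ (i + 1), d₂ x ∈ C₂ i)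
    (hd₂d₂ : d₂ ∘ₗ d₂ = 0) (hacyc₂ : LinearMap.ker d₂ = LinearMap.range d₂)
    (f : V₂ →ₗ[ℝ] V₁)
    (hf0 : ∀ x ∈ C₂ 0, f x = 0) (hfdeg : ∀ i, ∀ x ∈ C₂ (i + 1), f x ∈ C₁ i)
    (D : V₁ × V₂ →ₗ[ℝ] V₁ × V₂)
    (hD : ∀ x y, D (x, y) = (d₁ x + f y, d₂ y))
    (hDD : D ∘ₗ D = 0)
    (k₁ : V₁ →ₗ[ℝ] V₁) (k₂ : V₂ →ₗ[ℝ] V₂)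
    (hk₁deg : ∀ i, ∀ x ∈ C₁ i, k₁ x ∈ C₁ (i + 1))
    (hk₁ : d₁ ∘ₗ k₁ + k₁ ∘ₗ d₁ = LinearMap.id) (hk₁k₁ : k₁ ∘ₗ k₁ = 0)
    (hk₂deg : ∀ i, ∀ x ∈ C₂ i, k₂ x ∈ C₂ (i + 1))
    (hk₂ : d₂ ∘ₗ k₂ + k₂ ∘ₗ d₂ = LinearMap.id) (hk₂k₂ : k₂ ∘ₗ k₂ = 0)
    (K : V₁ × V₂ →ₗ[ℝ] V₁ × V₂)
    (hKdeg : ∀ i, ∀ v ∈ (C₁ i).prod (C₂ i), K v ∈ (C₁ (i + 1)).prod (C₂ (i + 1)))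
    (hK : D ∘ₗ K + K ∘ₗ D = LinearMap.id) (hKK : K ∘ₗ K = 0) :
    ∃ (h : ∀ v ∈ (⨆ i ∈ {i : ℕ | Even i}, C₁ i).prod (⨆ i ∈ {i : ℕ | Even i}, C₂ i),
        (LinearMap.prodMap (d₁ + k₁) (d₂ + k₂) ∘ₗ (D + K)) v ∈
          (⨆ i ∈ {i : ℕ | Even i}, C₁ i).prod (⨆ i ∈ {i : ℕ | Even i}, C₂ i)),
      |LinearMap.det ((LinearMap.prodMap (d₁ + k₁) (d₂ + k₂) ∘ₗ (D + K)).restrict h)|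
        = 1 :=
  torsion_multiplicative_ses_general n C₁ C₂ hb₁ hb₂ d₁ d₂ hd₁0 hd₁deg hd₁d₁ hd₂0 hd₂deg hd₂d₂ f hf0
    hfdeg D hD hDD k₁ k₂ hk₁deg hk₁ hk₁k₁ hk₂deg hk₂ hk₂k₂ K hKdeg hK
end

section
/- Torsion as an alternating product of boundary determinants: Let C_n → ⋯ → C_0 be an acyclic bounded chain complex of finite-dimensional real vector spaces with differential ∂. For each i let B_i := range ∂_{i+1} ⊆ C_i and choose a complement W_i with C_i = B_i ⊕ W_i; then ∂_i restricts to a linear isomorphism ∂̂_i : W_i → B_{i−1}. Choose bases b_i of B_i and f_i of W_i, and equip C_i with the combined basis (b_i, f_i). Let κ be the chain contraction defined by κ = (∂̂_i)⁻¹ on B_{i−1} and κ = 0 on W_{i−1} (so κ∘κ = 0). Let D_i be the matrix of ∂̂_i : W_i → B_{i−1} with respect to the bases f_i and b_{i−1}. Then the matrix of (∂+κ)_{even→odd} : C_even → C_odd with respect to the combined bases has determinant of absolute value ∏_{i=0}^{n} |det D_i|^{(−1)^i}. -/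
/-- Rank of the chosen complement `W_i` (with `C_i = B_i ⊕ W_i`): for an acyclic complex
the boundary map identifies `W_i ≅ B_{i-1}`, so `W_0 = 0` and `W_{i+1} ≅ B_i`. -/
abbrev wRank (m : ℕ → ℕ) : ℕ → ℕ := fun i => Nat.casesOn i 0 m

/-- The chain space `C_i = B_i ⊕ W_i` in the coordinates given by the chosen bases
`b_i` of `B_i` and `f_i` of `W_i`. -/
abbrev Csp (m : ℕ → ℕ) (i : ℕ) : Type := (Fin (m i) → ℝ) × (Fin (wRank m i) → ℝ)

/-- The boundary map `∂_{i+1} : C_{i+1} → C_i`: it kills `B_{i+1}` and maps `W_{i+1}` to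
`B_i` by the invertible matrix `Dm i` (the matrix `D_{i+1}` of `∂̂_{i+1}`). -/
noncomputable def delMap (m : ℕ → ℕ) (Dm : ∀ i, Matrix (Fin (m i)) (Fin (m i)) ℝ)
    (i : ℕ) : Csp m (i + 1) →ₗ[ℝ] Csp m i :=
  LinearMap.prod
    ((Matrix.mulVecLin (Dm i)).comp
      (LinearMap.snd ℝ (Fin (m (i + 1)) → ℝ) (Fin (wRank m (i + 1)) → ℝ)))
    0

/-- The chain contraction `κ_i : C_i → C_{i+1}` given by `(∂̂_{i+1})⁻¹` on `B_i` and `0`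
on `W_i` (so `κ∘κ = 0`). -/
noncomputable def kapMap (m : ℕ → ℕ) (Dm : ∀ i, Matrix (Fin (m i)) (Fin (m i)) ℝ)
    (i : ℕ) : Csp m i →ₗ[ℝ] Csp m (i + 1) :=
  LinearMap.prod 0
    ((Matrix.mulVecLin (Dm i)⁻¹).comp
      (LinearMap.fst ℝ (Fin (m i) → ℝ) (Fin (wRank m i) → ℝ)))

/-- Index of the even degrees `0 ≤ i ≤ n`. -/
abbrev EvIdx (n : ℕ) : Type := {i : Fin (n + 1) // Even i.1}

/-- Index of the odd degrees `0 < j ≤ n`, parametrized by their (even) predecessors. -/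
abbrev OdIdx (n : ℕ) : Type := {i : Fin n // Even i.1}

/-- `C_even`, the direct sum of the even-degree chain spaces. -/
abbrev CevenSp (m : ℕ → ℕ) (n : ℕ) : Type := ∀ i : EvIdx n, Csp m i.1.1

/-- `C_odd`, the direct sum of the odd-degree chain spaces (an odd degree `j ≤ n` is
written as `j = i + 1` with `i` even). -/
abbrev CoddSp (m : ℕ → ℕ) (n : ℕ) : Type := ∀ i : OdIdx n, Csp m (i.1.1 + 1)

/-- The map `(∂+κ)_{even→odd} : C_even → C_odd`: its component in odd degree `i+1` is
`κ_i` applied to the component of degree `i` plus `∂_{i+2}` applied to the component of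
degree `i+2` (when `i+2 ≤ n`). -/
noncomputable def phiMap (m : ℕ → ℕ) (Dm : ∀ i, Matrix (Fin (m i)) (Fin (m i)) ℝ)
    (n : ℕ) : CevenSp m n →ₗ[ℝ] CoddSp m n :=
  LinearMap.pi fun i : OdIdx n =>
    (kapMap m Dm i.1.1) ∘ₗ
      (LinearMap.proj (R := ℝ) (φ := fun j : EvIdx n => Csp m j.1.1)
        ⟨⟨i.1.1, Nat.lt_succ_of_lt i.1.isLt⟩, i.2⟩)
    + (if h : i.1.1 + 2 ≤ n then
        (delMap m Dm (i.1.1 + 1)) ∘ₗ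
          (LinearMap.proj (R := ℝ) (φ := fun j : EvIdx n => Csp m j.1.1)
            ⟨⟨i.1.1 + 2, by omega⟩, by exact Even.add i.2 even_two⟩)
      else 0)

/-- The combined basis of `C_even` (concatenating the bases `(b_i, f_i)` of the even
`C_i`). -/
noncomputable def evenBasis (m : ℕ → ℕ) (n : ℕ) :
    Module.Basis (Σ i : EvIdx n, (Fin (m i.1.1) ⊕ Fin (wRank m i.1.1))) ℝ (CevenSp m n) :=
  Pi.basis fun i : EvIdx n =>
    (Pi.basisFun ℝ (Fin (m i.1.1))).prod (Pi.basisFun ℝ (Fin (wRank m i.1.1)))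

/-- The combined basis of `C_odd`. -/
noncomputable def oddBasis (m : ℕ → ℕ) (n : ℕ) :
    Module.Basis (Σ i : OdIdx n, (Fin (m (i.1.1 + 1)) ⊕ Fin (wRank m (i.1.1 + 1)))) ℝ
      (CoddSp m n) :=
  Pi.basis fun i : OdIdx n =>
    (Pi.basisFun ℝ (Fin (m (i.1.1 + 1)))).prod (Pi.basisFun ℝ (Fin (wRank m (i.1.1 + 1))))

/-!
Pair the basis vectors of `b_i` (`i` even) with those of `f_{i+1}`, and those of `f_i` with those
of `b_{i-1}`. Since `κ` maps `B_i` to `W_{i+1}` by `D_{i+1}⁻¹` and kills `W_i`, while `∂` maps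
`W_i` to `B_{i-1}` by `D_i` and kills `B_i`, the matrix of `(∂+κ)_{even→odd}`, with its rows
reindexed by this pairing, is block diagonal with blocks `diag(D_{i+1}⁻¹, D_i)`. Any other
identification of the index sets only permutes the rows, which changes the determinant by a sign,
and the block of degree `i` contributes the factors of degrees `i` and `i + 1` of the alternating
product.
-/

theorem Matrix.det_blockDiagonal' {o R : Type*} [Fintype o] [DecidableEq o] {m' : o → Type*}
    [∀ i, Fintype (m' i)] [∀ i, DecidableEq (m' i)] [CommRing R]
    (M : ∀ i, Matrix (m' i) (m' i) R) : (blockDiagonal' M).det = ∏ k, (M k).det := by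
  let _ : LinearOrder o := LinearOrder.lift' _ (Fintype.equivFin o).injective
  rw [(blockTriangular_blockDiagonal' M).det_fintype]
  refine Finset.prod_congr rfl fun k _ => ?_
  rw [← det_submatrix_equiv_self (Equiv.sigmaSubtype k).symm]
  congr 1
  ext i j
  exact blockDiagonal'_apply_eq M k i j

theorem Finset.prod_filter_even_mul_succ {M : Type*} [CommMonoid M] (f : ℕ → M) (N : ℕ) :
    ∏ i ∈ (range N).filter Even, f i * f (i + 1) =
      (∏ i ∈ range N, f i) * if Even N then 1 else f N := by
  induction N with
  | zero => simp
  | succ N ih =>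
    rw [prod_filter, prod_range_succ, ← prod_filter, ih, prod_range_succ]
    by_cases hN : Even N <;> simp [hN, Nat.even_add_one, mul_assoc]

theorem Fin.prod_subtype_eq_prod_filter_range {M : Type*} [CommMonoid M] (p : ℕ → Prop)
    [DecidablePred p] (f : ℕ → M) (N : ℕ) :
    ∏ i : {i : Fin N // p i}, f i = ∏ i ∈ (Finset.range N).filter p, f i := by
  rw [← Finset.prod_subtype (Finset.univ.filter fun i : Fin N => p i) (by simp) (fun i => f i),
    Finset.prod_filter, Finset.prod_filter,
    Fin.prod_univ_eq_prod_range (fun i => if p i then f i else 1)]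

/-- The matrix `D_i` of `∂̂_i : W_i → B_{i-1}`; `D_0` is the empty matrix. -/
def boundaryMatrix (m : ℕ → ℕ) (Dm : ∀ i, Matrix (Fin (m i)) (Fin (m i)) ℝ) :
    ∀ i, Matrix (Fin (wRank m i)) (Fin (wRank m i)) ℝ
  | 0 => 1
  | i + 1 => Dm i

theorem det_boundaryMatrix (m : ℕ → ℕ) (Dm : ∀ i, Matrix (Fin (m i)) (Fin (m i)) ℝ)
    (i : ℕ) :
    (boundaryMatrix m Dm i).det = if i = 0 then 1 else (Dm (i - 1)).det := by
  cases i with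
  | zero => exact Matrix.det_fin_zero
  | succ i => rfl

section
variable {n : ℕ} {m : ℕ → ℕ}

/-- Pairs `b_i` with `f_{i+1}` and `f_i` with `b_{i-1}`; `b_n`, which has no partner, is empty
since `m n = 0`. -/
def pairingEquiv (hmn : m n = 0) :
    (Σ i : EvIdx n, (Fin (m i.1.1) ⊕ Fin (wRank m i.1.1))) ≃
      (Σ i : OdIdx n, (Fin (m (i.1.1 + 1)) ⊕ Fin (wRank m (i.1.1 + 1)))) where
  toFun
    | ⟨⟨⟨i, hi⟩, he⟩, .inl k⟩ =>
      if h : i < n then ⟨⟨⟨i, h⟩, he⟩, .inr k⟩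
      else (Fin.cast ((congrArg m (by omega : i = n)).trans hmn) k).elim0
    | ⟨⟨⟨0, _⟩, _⟩, .inr k⟩ => k.elim0
    | ⟨⟨⟨1, _⟩, he⟩, .inr _⟩ => (Nat.not_even_one he).elim
    | ⟨⟨⟨i + 2, _⟩, he⟩, .inr k⟩ =>
      ⟨⟨⟨i, by omega⟩, (Nat.even_add.mp he).mpr even_two⟩, .inl k⟩
  invFun
    | ⟨⟨⟨i, _⟩, he⟩, .inl k⟩ =>
      if h : i + 2 ≤ n then ⟨⟨⟨i + 2, by omega⟩, he.add even_two⟩, .inr k⟩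
      else (Fin.cast ((congrArg m (by omega : i + 1 = n)).trans hmn) k).elim0
    | ⟨⟨⟨i, hi⟩, he⟩, .inr k⟩ =>
      ⟨⟨⟨i, hi.trans (Nat.lt_succ_self n)⟩, he⟩, .inl k⟩
  left_inv := by
    rintro ⟨⟨⟨i, hi⟩, he⟩, k | k⟩
    · by_cases h : i < n
      · simp only [dif_pos h]
      · exact (Fin.cast ((congrArg m (by omega : i = n)).trans hmn) k).elim0
    · match i, hi, he, k with
      | 0, _, _, k => exact k.elim0
      | 1, _, he, _ => exact (Nat.not_even_one he).elim
      | i + 2, hi, _, _ => simp only [dif_pos (show i + 2 ≤ n by omega)]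
  right_inv := by
    rintro ⟨⟨⟨i, hi⟩, he⟩, k | k⟩
    · by_cases h : i + 2 ≤ n
      · simp only [dif_pos h]
      · exact (Fin.cast ((congrArg m (by omega : i + 1 = n)).trans hmn) k).elim0
    · simp only [dif_pos hi]

variable (Dm : ∀ i, Matrix (Fin (m i)) (Fin (m i)) ℝ)

theorem toMatrix_phiMap_pairingEquiv_self (hmn : m n = 0) (j : EvIdx n)
    (s t : Fin (m j.1.1) ⊕ Fin (wRank m j.1.1)) :
    LinearMap.toMatrix (evenBasis m n) (oddBasis m n) (phiMap m Dm n) (pairingEquiv hmn ⟨j, s⟩)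
        ⟨j, t⟩ = Matrix.fromBlocks (Dm j)⁻¹ 0 0 (boundaryMatrix m Dm j) s t := by
  obtain ⟨⟨j, hj⟩, he⟩ := j
  rcases s with k | k
  · by_cases h : j < n
    · by_cases h2 : j + 2 ≤ n <;> rcases t with l | l <;>
        simp [pairingEquiv, h, h2, LinearMap.toMatrix_apply, evenBasis, oddBasis, phiMap, kapMap,
          delMap, Matrix.mulVec_single, Pi.single_eq_of_ne]
    · exact (Fin.cast ((congrArg m (by omega : j = n)).trans hmn) k).elim0
  · match j, hj, he, k with
    | 0, _, _, k => exact k.elim0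
    | 1, _, he, _ => exact (Nat.not_even_one he).elim
    | j + 2, hj, _, _ =>
      rcases t with l | l <;>
        simp [pairingEquiv, (by omega : j + 2 ≤ n), LinearMap.toMatrix_apply, evenBasis,
          oddBasis, phiMap, kapMap, delMap, Matrix.mulVec_single, boundaryMatrix,
          Pi.single_eq_of_ne]

theorem toMatrix_phiMap_pairingEquiv_of_ne (hmn : m n = 0) {j j' : EvIdx n} (hjj' : j ≠ j')
    (s : Fin (m j.1.1) ⊕ Fin (wRank m j.1.1)) (t : Fin (m j'.1.1) ⊕ Fin (wRank m j'.1.1)) :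
    LinearMap.toMatrix (evenBasis m n) (oddBasis m n) (phiMap m Dm n) (pairingEquiv hmn ⟨j, s⟩)
        ⟨j', t⟩ = 0 := by
  obtain ⟨⟨j, hj⟩, he⟩ := j
  obtain ⟨⟨j', hj'⟩, he'⟩ := j'
  have hne : j ≠ j' := fun h => hjj' (by subst h; rfl)
  rcases s with k | k
  · by_cases h : j < n
    · by_cases h2 : j + 2 ≤ n <;>
        simp [pairingEquiv, h, h2, LinearMap.toMatrix_apply, evenBasis, oddBasis, phiMap, kapMap,
          delMap, Pi.single_eq_of_ne, hne]
    · exact (Fin.cast ((congrArg m (by omega : j = n)).trans hmn) k).elim0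
  · match j, hj, he, k, hne with
    | 0, _, _, k, _ => exact k.elim0
    | 1, _, he, _, _ => exact (Nat.not_even_one he).elim
    | j + 2, hj, _, _, hne =>
      simp [pairingEquiv, (by omega : j + 2 ≤ n), LinearMap.toMatrix_apply, evenBasis,
          oddBasis, phiMap, kapMap, delMap, Pi.single_eq_of_ne, hne]

theorem toMatrix_phiMap_submatrix_pairingEquiv (hmn : m n = 0) :
    (LinearMap.toMatrix (evenBasis m n) (oddBasis m n) (phiMap m Dm n)).submatrix
        (pairingEquiv hmn) id =
      Matrix.blockDiagonal' fun j : EvIdx n =>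
        Matrix.fromBlocks (Dm j)⁻¹ 0 0 (boundaryMatrix m Dm j) := by
  ext ⟨j, s⟩ ⟨j', t⟩
  by_cases hjj' : j = j'
  · subst hjj'
    rw [Matrix.blockDiagonal'_apply_eq]
    exact toMatrix_phiMap_pairingEquiv_self Dm hmn j s t
  · rw [Matrix.blockDiagonal'_apply_ne _ _ _ hjj']
    exact toMatrix_phiMap_pairingEquiv_of_ne Dm hmn hjj' s t

theorem abs_det_toMatrix_phiMap_submatrix (hmn : m n = 0)
    (e : (Σ i : EvIdx n, (Fin (m i.1.1) ⊕ Fin (wRank m i.1.1))) ≃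
      (Σ i : OdIdx n, (Fin (m (i.1.1 + 1)) ⊕ Fin (wRank m (i.1.1 + 1))))) :
    |((LinearMap.toMatrix (evenBasis m n) (oddBasis m n) (phiMap m Dm n)).submatrix e id).det|
      = ∏ j : EvIdx n, |(Dm j)⁻¹.det| * |(boundaryMatrix m Dm j).det| := by
  have hreindex :
      (LinearMap.toMatrix (evenBasis m n) (oddBasis m n) (phiMap m Dm n)).submatrix e id =
        ((LinearMap.toMatrix (evenBasis m n) (oddBasis m n) (phiMap m Dm n)).submatrix
          (pairingEquiv hmn) id).submatrix (e.trans (pairingEquiv hmn).symm) (Equiv.refl _) := by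
    ext x y
    simp
  rw [hreindex, Matrix.abs_det_submatrix_equiv_equiv, toMatrix_phiMap_submatrix_pairingEquiv,
    Matrix.det_blockDiagonal', Finset.abs_prod]
  simp only [Matrix.det_fromBlocks_zero₂₁, abs_mul]

end

theorem torsion_eq_alternating_product_of_boundary_determinants_general
    (n : ℕ) (m : ℕ → ℕ) (hm : ∀ i, n ≤ i → m i = 0)
    (Dm : ∀ i, Matrix (Fin (m i)) (Fin (m i)) ℝ)
    (e : (Σ i : EvIdx n, (Fin (m i.1.1) ⊕ Fin (wRank m i.1.1))) ≃
      (Σ i : OdIdx n, (Fin (m (i.1.1 + 1)) ⊕ Fin (wRank m (i.1.1 + 1))))) :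
    |((LinearMap.toMatrix (evenBasis m n) (oddBasis m n) (phiMap m Dm n)).submatrix
        e id).det|
      = ∏ i ∈ Finset.range (n + 1),
          |if i = 0 then (1 : ℝ) else (Dm (i - 1)).det| ^ ((-1 : ℤ) ^ i) := by
  set g : ℕ → ℝ := fun i => |if i = 0 then (1 : ℝ) else (Dm (i - 1)).det| ^ ((-1 : ℤ) ^ i)
  have hmn : m n = 0 := hm n le_rfl
  have hg_last : g (n + 1) = 1 := by
    have : IsEmpty (Fin (m n)) := by rw [hmn]; infer_instance
    simp [g, Matrix.det_isEmpty]
  have hblock : ∀ j : EvIdx n,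
      |(Dm j)⁻¹.det| * |(boundaryMatrix m Dm j).det| = g j * g (j + 1) := by
    rintro ⟨j, hj⟩
    simp [g, hj.neg_one_pow, (hj.add_one).neg_one_pow, det_boundaryMatrix, Matrix.det_nonsing_inv,
      mul_comm]
  rw [abs_det_toMatrix_phiMap_submatrix Dm hmn e, Fintype.prod_congr _ _ hblock,
    Fin.prod_subtype_eq_prod_filter_range Even (fun i => g i * g (i + 1)),
    Finset.prod_filter_even_mul_succ, hg_last]
  simp

/-- Torsion as an alternating product of boundary determinants: for the acyclic complex
`C_i = B_i ⊕ W_i` (trivial above degree `n`) with `∂̂_{i+1} : W_{i+1} ≅ B_i` given by the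
invertible matrices `Dm i` in the chosen bases, and `κ` the chain contraction inverting
`∂̂` on boundaries (so `κ∘κ = 0`), the matrix of `(∂+κ)_{even→odd}` in the combined bases
(for any identification `e` of the index sets) has determinant of absolute value
`∏_{i=0}^n |det D_i|^{(−1)^i}`, where `D_0` is the empty matrix (`det D_0 = 1`) and
`D_{i+1}` has determinant `det (Dm i)`. -/
theorem torsion_eq_alternating_product_of_boundary_determinants
    (n : ℕ) (m : ℕ → ℕ) (hm : ∀ i, n ≤ i → m i = 0)
    (Dm : ∀ i, Matrix (Fin (m i)) (Fin (m i)) ℝ) (hDm : ∀ i, IsUnit (Dm i))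
    (e : (Σ i : EvIdx n, (Fin (m i.1.1) ⊕ Fin (wRank m i.1.1))) ≃
      (Σ i : OdIdx n, (Fin (m (i.1.1 + 1)) ⊕ Fin (wRank m (i.1.1 + 1))))) :
    |((LinearMap.toMatrix (evenBasis m n) (oddBasis m n) (phiMap m Dm n)).submatrix
        e id).det|
      = ∏ i ∈ Finset.range (n + 1),
          |if i = 0 then (1 : ℝ) else (Dm (i - 1)).det| ^ ((-1 : ℤ) ^ i) :=
  torsion_eq_alternating_product_of_boundary_determinants_general n m hm Dm e
end

section
/- Duality for real torsion: For 0 ≤ i ≤ n let d_i ∈ ℕ, let C_i := Fin(d_i) → ℝ with its standard basis, and let ∂_i : C_i → C_{i−1} be given by matrices A_i, forming an acyclic chain complex. Define the torsion τ(C) ∈ ℝ_{>0} as the absolute value of the determinant, with respect to the standard bases, of (∂+κ)_{even→odd} : C_even → C_odd for a chain contraction κ with κ∘κ = 0 (this is independent of the choice of κ). Define the dual complex C^∨ by (C^∨)_{n−k} := Fin(d_k) → ℝ with boundary map (C^∨)_{n−k+1} → (C^∨)_{n−k} given by the transposed matrix A_kᵀ; C^∨ is again an acyclic chain complex. Then τ(C^∨)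 = τ(C)^{(−1)^{n+1}}. -/
/-- Index set for the standard basis of `C_even = ⊕_{i even, i ≤ n} ℝ^{dim i}`. -/
abbrev TorsionIdxE (n : ℕ) (dim : ℕ → ℕ) : Type :=
  Σ i : {i : Fin (n + 1) // Even i.1}, Fin (dim i.1.1)

/-- Index set for the standard basis of `C_odd = ⊕_{j odd, j ≤ n} ℝ^{dim j}`. -/
abbrev TorsionIdxO (n : ℕ) (dim : ℕ → ℕ) : Type :=
  Σ j : {j : Fin (n + 1) // ¬ Even j.1}, Fin (dim j.1.1)

/-- The matrix of `(∂+κ)_{even→odd}` with respect to the standard bases, for the chain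
complex with `C_i = ℝ^{dim i}`, boundary matrices `A i` (the matrix of
`∂_{i+1} : C_{i+1} → C_i`) and chain contraction matrices `K i` (the matrix of
`κ_i : C_i → C_{i+1}`). -/
def torsionMatrix (n : ℕ) (dim : ℕ → ℕ)
    (A : ∀ i : ℕ, Matrix (Fin (dim i)) (Fin (dim (i + 1))) ℝ)
    (K : ∀ i : ℕ, Matrix (Fin (dim (i + 1))) (Fin (dim i)) ℝ) :
    Matrix (TorsionIdxO n dim) (TorsionIdxE n dim) ℝ :=
  fun jr is =>
    if h1 : (is.1.1 : ℕ) = (jr.1.1 : ℕ) + 1 then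
      A (jr.1.1 : ℕ) jr.2 (Fin.cast (congrArg dim h1) is.2)
    else if h2 : (jr.1.1 : ℕ) = (is.1.1 : ℕ) + 1 then
      K (is.1.1 : ℕ) (Fin.cast (congrArg dim h2) jr.2) is.2
    else 0

/-- Dimensions of the dual complex: `(C^∨)_{n−k} = C_k`, i.e. `dim^∨ k = dim (n − k)`
for `k ≤ n` and `0` above degree `n`. -/
def dualDim (n : ℕ) (dim : ℕ → ℕ) : ℕ → ℕ :=
  fun k => if k ≤ n then dim (n - k) else 0

/-- Boundary matrices of the dual complex: the boundary `(C^∨)_{j+1} → (C^∨)_j` is the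
transpose of the boundary `C_{n−j} → C_{n−j−1}` of the original complex. -/
def dualA (n : ℕ) (dim : ℕ → ℕ)
    (A : ∀ i : ℕ, Matrix (Fin (dim i)) (Fin (dim (i + 1))) ℝ) :
    ∀ j : ℕ, Matrix (Fin (dualDim n dim j)) (Fin (dualDim n dim (j + 1))) ℝ :=
  fun j r c =>
    if h : j + 1 ≤ n then
      A (n - j - 1)
        (Fin.cast (show dualDim n dim (j + 1) = dim (n - j - 1) by
          simp only [dualDim]; rw [if_pos h]
          exact congrArg dim (by omega)) c)
        (Fin.cast (show dualDim n dim j = dim (n - j - 1 + 1) by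
          simp only [dualDim]; rw [if_pos (by omega : j ≤ n)]
          exact congrArg dim (by omega)) r)
    else 0

/- ### helpers -/
open scoped Matrix

@[simp] lemma fin_cast_self {n : ℕ} (h : n = n) (a : Fin n) : Fin.cast h a = a := rfl

lemma famCast {d d' : ℕ → ℕ} (M : ∀ k, Matrix (Fin (d k)) (Fin (d' k)) ℝ)
    {k k' : ℕ} (h : k = k') {a : Fin (d k)} {b : Fin (d' k)}
    {a' : Fin (d k')} {b' : Fin (d' k')} (ha : (a : ℕ) = a') (hb : (b : ℕ) = b') :
    M k a b = M k' a' b' := by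
  subst h
  obtain rfl : a = a' := Fin.ext ha
  obtain rfl : b = b' := Fin.ext hb
  rfl

lemma sigmaFinEq {n : ℕ} {dm : ℕ → ℕ} {P : Fin (n+1) → Prop}
    (x y : Σ i : {i : Fin (n+1) // P i}, Fin (dm i.1.1))
    (h1 : (x.1.1.1 : ℕ) = y.1.1.1) (h2 : (x.2 : ℕ) = y.2) : x = y := by
  rcases x with ⟨⟨⟨xi, hxi⟩, hPx⟩, xr⟩
  rcases y with ⟨⟨⟨yi, hyi⟩, hPy⟩, yr⟩
  have h1' : xi = yi := h1
  subst h1'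
  obtain rfl : xr = yr := Fin.ext h2
  rfl

lemma abs_det_submatrix_eq {X Y Z W : Type*} [Fintype X] [Fintype Y] [Fintype Z] [Fintype W]
    [DecidableEq X] [DecidableEq Y] [DecidableEq Z] [DecidableEq W]
    (B : Matrix X Y ℝ) (f1 : Z ≃ X) (g1 : Z ≃ Y) (f2 : W ≃ X) (g2 : W ≃ Y) :
    |(B.submatrix f1 g1).det| = |(B.submatrix f2 g2).det| := by
  have h : B.submatrix f1 g1
      = (B.submatrix f2 g2).submatrix (f1.trans f2.symm) (g1.trans g2.symm) := by
    ext x y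
    simp [Matrix.submatrix_apply]
  rw [h, Matrix.abs_det_submatrix_equiv_equiv]

lemma dualDim_eq {n k : ℕ} (dim : ℕ → ℕ) (h : k ≤ n) : dualDim n dim k = dim (n - k) :=
  if_pos h

lemma dualA_zero (n : ℕ) (dim : ℕ → ℕ) A {j : ℕ} (h : ¬ j + 1 ≤ n)
    (r : Fin (dualDim n dim j)) (c : Fin (dualDim n dim (j+1))) :
    dualA n dim A j r c = 0 := by
  simp only [dualA]
  rw [dif_neg h]

lemma dualA_app (n : ℕ) (dim : ℕ → ℕ) A {j : ℕ} (h : j + 1 ≤ n)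
    (r : Fin (dualDim n dim j)) (c : Fin (dualDim n dim (j+1))) :
    dualA n dim A j r c = A (n - j - 1)
      (Fin.cast (by rw [dualDim_eq dim h]; exact congrArg dim (by omega)) c)
      (Fin.cast (by rw [dualDim_eq dim (by omega : j ≤ n)]; exact congrArg dim (by omega)) r) := by
  simp only [dualA]
  rw [dif_pos h]

lemma dual_complex (n : ℕ) (dim : ℕ → ℕ)
    (A : ∀ i : ℕ, Matrix (Fin (dim i)) (Fin (dim (i + 1))) ℝ)
    (hcomplex : ∀ i, A i * A (i + 1) = 0) :
    ∀ j, dualA n dim A j * dualA n dim A (j + 1) = 0 := by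
  intro j
  ext r c
  rw [Matrix.mul_apply, Matrix.zero_apply]
  by_cases h2 : j + 2 ≤ n
  · have key := congrFun (congrFun (hcomplex (n - j - 2))
      (Fin.cast (by rw [dualDim_eq dim (by omega : j + 2 ≤ n)]; exact congrArg dim (by omega)) c))
      (Fin.cast (by rw [dualDim_eq dim (by omega : j ≤ n)]; exact congrArg dim (by omega)) r)
    rw [Matrix.mul_apply, Matrix.zero_apply] at key
    rw [← key]
    apply Fintype.sum_equiv (finCongr (show dualDim n dim (j+1) = dim (n - j - 2 + 1) by
      rw [dualDim_eq dim (by omega : j + 1 ≤ n)]; exact congrArg dim (by omega)))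
    intro m
    rw [dualA_app n dim A (by omega : j + 1 ≤ n), dualA_app n dim A (by omega : (j+1) + 1 ≤ n)]
    rw [mul_comm]
    refine congrArg₂ (· * ·) ?_ ?_
    · exact famCast A (by omega : n - (j+1) - 1 = n - j - 2) rfl rfl
    · exact famCast A (by omega : n - j - 1 = n - j - 2 + 1) rfl rfl
  · apply Finset.sum_eq_zero
    intro m _
    by_cases h1 : j + 1 ≤ n
    · rw [dualA_zero n dim A (by omega : ¬ (j+1) + 1 ≤ n), mul_zero]
    · rw [dualA_zero n dim A h1, zero_mul]

lemma dual_acyc0 (n : ℕ) (dim : ℕ → ℕ)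
    (A : ∀ i : ℕ, Matrix (Fin (dim i)) (Fin (dim (i + 1))) ℝ)
    (K' : ∀ i : ℕ, Matrix (Fin (dualDim n dim (i + 1))) (Fin (dualDim n dim i)) ℝ)
    (hK'0 : dualA n dim A 0 * K' 0 = 1) :
    LinearMap.range (Matrix.mulVecLin (dualA n dim A 0)) = ⊤ := by
  rw [LinearMap.range_eq_top]
  intro x
  exact ⟨K' 0 *ᵥ x, by rw [Matrix.mulVecLin_apply, Matrix.mulVec_mulVec, hK'0, Matrix.one_mulVec]⟩

lemma dual_acyc (n : ℕ) (dim : ℕ → ℕ)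
    (A : ∀ i : ℕ, Matrix (Fin (dim i)) (Fin (dim (i + 1))) ℝ)
    (hcomplex : ∀ i, A i * A (i + 1) = 0)
    (K' : ∀ i : ℕ, Matrix (Fin (dualDim n dim (i + 1))) (Fin (dualDim n dim i)) ℝ)
    (hK' : ∀ i, dualA n dim A (i + 1) * K' (i + 1) + K' i * dualA n dim A i = 1) :
    ∀ j, LinearMap.ker (Matrix.mulVecLin (dualA n dim A j))
      = LinearMap.range (Matrix.mulVecLin (dualA n dim A (j + 1))) := by
  intro j
  ext x
  simp only [LinearMap.mem_ker, LinearMap.mem_range, Matrix.mulVecLin_apply]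
  constructor
  · intro hx
    refine ⟨K' (j+1) *ᵥ x, ?_⟩
    have := congrFun (congrArg (fun M => Matrix.mulVec M x) (hK' j))
    have h1 : (dualA n dim A (j + 1) * K' (j + 1) + K' j * dualA n dim A j) *ᵥ x = x := by
      rw [hK' j, Matrix.one_mulVec]
    rw [Matrix.add_mulVec, ← Matrix.mulVec_mulVec, ← Matrix.mulVec_mulVec, hx,
      Matrix.mulVec_zero, add_zero] at h1
    exact h1
  · rintro ⟨y, rfl⟩
    rw [Matrix.mulVec_mulVec, dual_complex n dim A hcomplex j, Matrix.zero_mulVec]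

/- ### the (∂+κ) matrix in the other direction, odd → even -/

def torsionMatrixOE (n : ℕ) (dim : ℕ → ℕ)
    (A : ∀ i : ℕ, Matrix (Fin (dim i)) (Fin (dim (i + 1))) ℝ)
    (K : ∀ i : ℕ, Matrix (Fin (dim (i + 1))) (Fin (dim i)) ℝ) :
    Matrix (TorsionIdxE n dim) (TorsionIdxO n dim) ℝ :=
  fun is jr =>
    if h1 : (jr.1.1 : ℕ) = (is.1.1 : ℕ) + 1 then
      A (is.1.1 : ℕ) is.2 (Fin.cast (congrArg dim h1) jr.2)
    else if h2 : (is.1.1 : ℕ) = (jr.1.1 : ℕ) + 1 then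
      K (jr.1.1 : ℕ) (Fin.cast (congrArg dim h2) is.2) jr.2
    else 0

section EntryLemmas

variable (n : ℕ) (dim : ℕ → ℕ)
    (A : ∀ i : ℕ, Matrix (Fin (dim i)) (Fin (dim (i + 1))) ℝ)
    (K : ∀ i : ℕ, Matrix (Fin (dim (i + 1))) (Fin (dim i)) ℝ)

lemma OE_app_A {iv jv : ℕ} (h : jv = iv + 1) (hi : iv < n + 1) (hj : jv < n + 1)
    (hei : Even iv) (hoj : ¬ Even jv) (s : Fin (dim iv)) (r : Fin (dim jv)) :
    torsionMatrixOE n dim A K ⟨⟨⟨iv, hi⟩, hei⟩, s⟩ ⟨⟨⟨jv, hj⟩, hoj⟩, r⟩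
      = A iv s (Fin.cast (congrArg dim h) r) := by
  simp only [torsionMatrixOE]
  rw [dif_pos h]

lemma OE_app_K {iv jv : ℕ} (h : iv = jv + 1) (hi : iv < n + 1) (hj : jv < n + 1)
    (hei : Even iv) (hoj : ¬ Even jv) (s : Fin (dim iv)) (r : Fin (dim jv)) :
    torsionMatrixOE n dim A K ⟨⟨⟨iv, hi⟩, hei⟩, s⟩ ⟨⟨⟨jv, hj⟩, hoj⟩, r⟩
      = K jv (Fin.cast (congrArg dim h) s) r := by
  simp only [torsionMatrixOE]
  rw [dif_neg (by omega), dif_pos h]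

lemma OE_app_zero {iv jv : ℕ} (h1 : ¬ jv = iv + 1) (h2 : ¬ iv = jv + 1)
    (hi : iv < n + 1) (hj : jv < n + 1)
    (hei : Even iv) (hoj : ¬ Even jv) (s : Fin (dim iv)) (r : Fin (dim jv)) :
    torsionMatrixOE n dim A K ⟨⟨⟨iv, hi⟩, hei⟩, s⟩ ⟨⟨⟨jv, hj⟩, hoj⟩, r⟩ = 0 := by
  simp only [torsionMatrixOE]
  rw [dif_neg h1, dif_neg h2]

lemma M_app_A {iv jv : ℕ} (h : iv = jv + 1) (hi : iv < n + 1) (hj : jv < n + 1)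
    (hei : Even iv) (hoj : ¬ Even jv) (s : Fin (dim iv)) (r : Fin (dim jv)) :
    torsionMatrix n dim A K ⟨⟨⟨jv, hj⟩, hoj⟩, r⟩ ⟨⟨⟨iv, hi⟩, hei⟩, s⟩
      = A jv r (Fin.cast (congrArg dim h) s) := by
  simp only [torsionMatrix]
  rw [dif_pos h]

lemma M_app_K {iv jv : ℕ} (h : jv = iv + 1) (hi : iv < n + 1) (hj : jv < n + 1)
    (hei : Even iv) (hoj : ¬ Even jv) (s : Fin (dim iv)) (r : Fin (dim jv)) :
    torsionMatrix n dim A K ⟨⟨⟨jv, hj⟩, hoj⟩, r⟩ ⟨⟨⟨iv, hi⟩, hei⟩, s⟩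
      = K iv (Fin.cast (congrArg dim h) r) s := by
  simp only [torsionMatrix]
  rw [dif_neg (by omega), dif_pos h]

lemma M_app_zero {iv jv : ℕ} (h1 : ¬ iv = jv + 1) (h2 : ¬ jv = iv + 1)
    (hi : iv < n + 1) (hj : jv < n + 1)
    (hei : Even iv) (hoj : ¬ Even jv) (s : Fin (dim iv)) (r : Fin (dim jv)) :
    torsionMatrix n dim A K ⟨⟨⟨jv, hj⟩, hoj⟩, r⟩ ⟨⟨⟨iv, hi⟩, hei⟩, s⟩ = 0 := by
  simp only [torsionMatrix]
  rw [dif_neg h1, dif_neg h2]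

end EntryLemmas

/- ### sums over the odd index set -/

lemma sum_subtype_val_ite {n : ℕ} {P : Fin (n+1) → Prop} [DecidablePred P]
    (m : ℕ) (hm : m < n + 1) (hP : P ⟨m, hm⟩) (u : ℝ) :
    (∑ j : {j : Fin (n+1) // P j}, if (j.1.1 : ℕ) = m then u else 0) = u := by
  rw [Finset.sum_eq_single (⟨⟨m, hm⟩, hP⟩ : {j : Fin (n+1) // P j})]
  · rw [if_pos rfl]
  · intro b _ hb
    rw [if_neg]
    intro hval
    exact hb (Subtype.ext (Fin.ext hval))
  · intro h
    exact absurd (Finset.mem_univ _) h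

lemma sum_subtype_val_ite_zero {n : ℕ} {P : Fin (n+1) → Prop} [DecidablePred P]
    (m : ℕ) (hm : ¬ m < n + 1) (u : ℝ) :
    (∑ j : {j : Fin (n+1) // P j}, if (j.1.1 : ℕ) = m then u else 0) = 0 := by
  apply Finset.sum_eq_zero
  intro j _
  rw [if_neg]
  intro hval
  exact hm (hval ▸ j.1.isLt)

section MulEntries

variable (n : ℕ) (dim : ℕ → ℕ)
    (A : ∀ i : ℕ, Matrix (Fin (dim i)) (Fin (dim (i + 1))) ℝ)
    (K1 K2 : ∀ i : ℕ, Matrix (Fin (dim (i + 1))) (Fin (dim i)) ℝ)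

lemma NM_apply (X Y : TorsionIdxE n dim) :
    (torsionMatrixOE n dim A K2 * torsionMatrix n dim A K1) X Y
      = ∑ j : {j : Fin (n+1) // ¬ Even j.1}, ∑ r : Fin (dim j.1.1),
          torsionMatrixOE n dim A K2 X ⟨j, r⟩ * torsionMatrix n dim A K1 ⟨j, r⟩ Y := by
  rw [Matrix.mul_apply, ← Finset.univ_sigma_univ, Finset.sum_sigma]

lemma NM_offdiag (hcomplex : ∀ i, A i * A (i + 1) = 0) (X Y : TorsionIdxE n dim)
    (hdeg : (X.1.1.1 : ℕ) < (Y.1.1.1 : ℕ)) :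
    (torsionMatrixOE n dim A K2 * torsionMatrix n dim A K1) X Y = 0 := by
  obtain ⟨⟨⟨iv, hiv⟩, hei⟩, s⟩ := X
  obtain ⟨⟨⟨i'v, hi'v⟩, hei'⟩, s'⟩ := Y
  have hdeg' : iv < i'v := hdeg
  rw [NM_apply]
  apply Finset.sum_eq_zero
  rintro ⟨⟨jv, hjv⟩, hoj⟩ -
  by_cases hj1 : jv = iv + 1
  · subst hj1
    by_cases hj2 : i'v = iv + 2
    · subst hj2
      have : ∀ r : Fin (dim (iv + 1)),
          torsionMatrixOE n dim A K2 ⟨⟨⟨iv, hiv⟩, hei⟩, s⟩ ⟨⟨⟨iv+1, hjv⟩, hoj⟩, r⟩ *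
            torsionMatrix n dim A K1 ⟨⟨⟨iv+1, hjv⟩, hoj⟩, r⟩ ⟨⟨⟨iv+2, hi'v⟩, hei'⟩, s'⟩
          = A iv s r * A (iv + 1) r s' := by
        intro r
        rw [OE_app_A n dim A K2 rfl, M_app_A n dim A K1 rfl]
        rfl
      rw [Finset.sum_congr rfl (fun r _ => this r), ← Matrix.mul_apply, hcomplex iv]
      rfl
    · apply Finset.sum_eq_zero
      intro r _
      rw [M_app_zero n dim A K1 (by omega) (by omega), mul_zero]
  · by_cases hj0 : iv = jv + 1
    · apply Finset.sum_eq_zero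
      intro r _
      rw [M_app_zero n dim A K1 (by omega) (by omega), mul_zero]
    · apply Finset.sum_eq_zero
      intro r _
      rw [OE_app_zero n dim A K2 (by omega) (by omega), zero_mul]

lemma NM_diag_succ (hdim : ∀ i, n < i → dim i = 0) (m : ℕ) (hm : m + 1 < n + 1)
    (hev : Even (m + 1)) (s s' : Fin (dim (m + 1))) :
    (torsionMatrixOE n dim A K2 * torsionMatrix n dim A K1)
        ⟨⟨⟨m+1, hm⟩, hev⟩, s⟩ ⟨⟨⟨m+1, hm⟩, hev⟩, s'⟩
      = (A (m+1) * K1 (m+1) + K2 m * A m) s s' := by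
  have hoddm : ¬ Even m := Nat.even_add_one.mp hev
  rw [NM_apply]
  have claim : ∀ j : {j : Fin (n+1) // ¬ Even j.1},
      (∑ r : Fin (dim j.1.1),
        torsionMatrixOE n dim A K2 ⟨⟨⟨m+1, hm⟩, hev⟩, s⟩ ⟨j, r⟩ *
          torsionMatrix n dim A K1 ⟨j, r⟩ ⟨⟨⟨m+1, hm⟩, hev⟩, s'⟩)
      = (if (j.1.1 : ℕ) = m then (K2 m * A m) s s' else 0)
        + (if (j.1.1 : ℕ) = m + 2 then (A (m+1) * K1 (m+1)) s s' else 0) := by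
    rintro ⟨⟨jv, hjv⟩, hoj⟩
    dsimp only
    by_cases hj1 : jv = m
    · subst hj1
      rw [if_pos rfl, if_neg (by omega)]
      have : ∀ r : Fin (dim jv),
          torsionMatrixOE n dim A K2 ⟨⟨⟨jv+1, hm⟩, hev⟩, s⟩ ⟨⟨⟨jv, hjv⟩, hoj⟩, r⟩ *
            torsionMatrix n dim A K1 ⟨⟨⟨jv, hjv⟩, hoj⟩, r⟩ ⟨⟨⟨jv+1, hm⟩, hev⟩, s'⟩
          = K2 jv s r * A jv r s' := by
        intro r
        rw [OE_app_K n dim A K2 rfl, M_app_A n dim A K1 rfl]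
        rfl
      rw [Finset.sum_congr rfl (fun r _ => this r), ← Matrix.mul_apply, add_zero]
    · by_cases hj2 : jv = m + 2
      · subst hj2
        rw [if_neg (by omega), if_pos rfl, zero_add]
        have : ∀ r : Fin (dim (m+2)),
            torsionMatrixOE n dim A K2 ⟨⟨⟨m+1, hm⟩, hev⟩, s⟩ ⟨⟨⟨m+2, hjv⟩, hoj⟩, r⟩ *
              torsionMatrix n dim A K1 ⟨⟨⟨m+2, hjv⟩, hoj⟩, r⟩ ⟨⟨⟨m+1, hm⟩, hev⟩, s'⟩
            = A (m+1) s r * K1 (m+1) r s' := by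
          intro r
          rw [OE_app_A n dim A K2 rfl, M_app_K n dim A K1 rfl]
          rfl
        rw [Finset.sum_congr rfl (fun r _ => this r), ← Matrix.mul_apply]
      · rw [if_neg hj1, if_neg hj2, add_zero]
        apply Finset.sum_eq_zero
        intro r _
        rw [OE_app_zero n dim A K2 (by omega) (by omega), zero_mul]
  rw [Finset.sum_congr rfl (fun j _ => claim j), Finset.sum_add_distrib]
  rw [sum_subtype_val_ite m (by omega) (show ¬ Even ((⟨m, by omega⟩ : Fin (n+1)) : ℕ) from hoddm)]
  by_cases hc : m + 2 < n + 1
  · have hodd2 : ¬ Even ((⟨m + 2, hc⟩ : Fin (n+1)) : ℕ) :=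
      fun h => (Nat.even_add_one.mp h) hev

    rw [sum_subtype_val_ite (m+2) hc hodd2, Matrix.add_apply, add_comm]
  · rw [sum_subtype_val_ite_zero (m+2) hc, Matrix.add_apply]
    have h0 : (A (m+1) * K1 (m+1)) s s' = 0 := by
      rw [Matrix.mul_apply]
      apply Finset.sum_eq_zero
      intro c _
      exact absurd c.isLt (by have := hdim (m+1+1) (by omega); omega)
    rw [h0, add_zero, zero_add]

lemma NM_diag_zero (hdim : ∀ i, n < i → dim i = 0) (hK1_0 : A 0 * K1 0 = 1)
    (h0 : (0 : ℕ) < n + 1) (hev : Even ((⟨0, h0⟩ : Fin (n+1)) : ℕ)) (s s' : Fin (dim 0)) :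
    (torsionMatrixOE n dim A K2 * torsionMatrix n dim A K1)
        ⟨⟨⟨0, h0⟩, hev⟩, s⟩ ⟨⟨⟨0, h0⟩, hev⟩, s'⟩
      = (1 : Matrix (Fin (dim 0)) (Fin (dim 0)) ℝ) s s' := by
  rw [← hK1_0, NM_apply]
  have claim : ∀ j : {j : Fin (n+1) // ¬ Even j.1},
      (∑ r : Fin (dim j.1.1),
        torsionMatrixOE n dim A K2 ⟨⟨⟨0, h0⟩, hev⟩, s⟩ ⟨j, r⟩ *
          torsionMatrix n dim A K1 ⟨j, r⟩ ⟨⟨⟨0, h0⟩, hev⟩, s'⟩)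
      = (if (j.1.1 : ℕ) = 1 then (A 0 * K1 0) s s' else 0) := by
    rintro ⟨⟨jv, hjv⟩, hoj⟩
    dsimp only
    by_cases hj1 : jv = 1
    · subst hj1
      rw [if_pos rfl]
      have : ∀ r : Fin (dim 1),
          torsionMatrixOE n dim A K2 ⟨⟨⟨0, h0⟩, hev⟩, s⟩ ⟨⟨⟨1, hjv⟩, hoj⟩, r⟩ *
            torsionMatrix n dim A K1 ⟨⟨⟨1, hjv⟩, hoj⟩, r⟩ ⟨⟨⟨0, h0⟩, hev⟩, s'⟩
          = A 0 s r * K1 0 r s' := by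
        intro r
        rw [OE_app_A n dim A K2 rfl, M_app_K n dim A K1 rfl]
        rfl
      rw [Finset.sum_congr rfl (fun r _ => this r), ← Matrix.mul_apply]
    · rw [if_neg hj1]
      apply Finset.sum_eq_zero
      intro r _
      rw [OE_app_zero n dim A K2 (by omega) (by omega), zero_mul]
  rw [Finset.sum_congr rfl (fun j _ => claim j)]
  by_cases hc : 1 < n + 1
  · exact sum_subtype_val_ite (P := fun f : Fin (n+1) => ¬ Even (f : ℕ)) 1 hc Nat.not_even_one _
  · rw [sum_subtype_val_ite_zero 1 hc]
    rw [Matrix.mul_apply]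
    symm
    apply Finset.sum_eq_zero
    intro c _
    exact absurd c.isLt (by have := hdim (0+1) (by omega); omega)

end MulEntries

/- ### determinant of 1 + (difference of contractions) ∘ ∂ -/

lemma det_one_add_diff (dim : ℕ → ℕ)
    (A : ∀ i : ℕ, Matrix (Fin (dim i)) (Fin (dim (i + 1))) ℝ)
    (K1 K2 : ∀ i : ℕ, Matrix (Fin (dim (i + 1))) (Fin (dim i)) ℝ)
    (hK1_0 : A 0 * K1 0 = 1) (hK2_0 : A 0 * K2 0 = 1)
    (hK1 : ∀ i, A (i + 1) * K1 (i + 1) + K1 i * A i = 1)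
    (hK2 : ∀ i, A (i + 1) * K2 (i + 1) + K2 i * A i = 1) :
    ∀ i, ((1 : Matrix (Fin (dim (i+1))) (Fin (dim (i+1))) ℝ) + (K2 i - K1 i) * A i).det = 1
      ∧ ((1 : Matrix (Fin (dim (i+1))) (Fin (dim (i+1))) ℝ) + (K1 i - K2 i) * A i).det = 1 := by
  intro i
  induction i with
  | zero =>
    constructor <;> rw [Matrix.det_one_add_mul_comm]
    · have h : A 0 * (K2 0 - K1 0) = 0 := by rw [Matrix.mul_sub, hK1_0, hK2_0, sub_self]
      rw [h, add_zero, Matrix.det_one]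
    · have h : A 0 * (K1 0 - K2 0) = 0 := by rw [Matrix.mul_sub, hK1_0, hK2_0, sub_self]
      rw [h, add_zero, Matrix.det_one]
  | succ m ih =>
    have e1 : A (m+1) * K1 (m+1) = 1 - K1 m * A m := eq_sub_of_add_eq (hK1 m)
    have e2 : A (m+1) * K2 (m+1) = 1 - K2 m * A m := eq_sub_of_add_eq (hK2 m)
    constructor <;> rw [Matrix.det_one_add_mul_comm]
    · have h : A (m+1) * (K2 (m+1) - K1 (m+1)) = (K1 m - K2 m) * A m := by
        rw [Matrix.mul_sub, e1, e2, Matrix.sub_mul]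
        abel
      rw [h]
      exact ih.2
    · have h : A (m+1) * (K1 (m+1) - K2 (m+1)) = (K2 m - K1 m) * A m := by
        rw [Matrix.mul_sub, e1, e2, Matrix.sub_mul]
        abel
      rw [h]
      exact ih.1

/- ### the core determinant identity -/

lemma block_det (n : ℕ) (dim : ℕ → ℕ) (hdim : ∀ i, n < i → dim i = 0)
    (A : ∀ i : ℕ, Matrix (Fin (dim i)) (Fin (dim (i + 1))) ℝ)
    (K1 K2 : ∀ i : ℕ, Matrix (Fin (dim (i + 1))) (Fin (dim i)) ℝ)
    (hK1_0 : A 0 * K1 0 = 1) (hK2_0 : A 0 * K2 0 = 1)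
    (hK1 : ∀ i, A (i + 1) * K1 (i + 1) + K1 i * A i = 1)
    (hK2 : ∀ i, A (i + 1) * K2 (i + 1) + K2 i * A i = 1)
    (iv : ℕ) (hlt : iv < n + 1) (hev : Even ((⟨iv, hlt⟩ : Fin (n+1)) : ℕ)) :
    ∀ B : Matrix (Fin (dim iv)) (Fin (dim iv)) ℝ,
      (∀ s s', B s s' = (torsionMatrixOE n dim A K2 * torsionMatrix n dim A K1)
          ⟨⟨⟨iv, hlt⟩, hev⟩, s⟩ ⟨⟨⟨iv, hlt⟩, hev⟩, s'⟩) → B.det = 1 := by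
  revert hlt hev
  cases iv with
  | zero =>
    intro hlt hev B hB
    have hone : B = (1 : Matrix (Fin (dim 0)) (Fin (dim 0)) ℝ) := by
      ext s s'
      rw [hB, NM_diag_zero n dim A K1 K2 hdim hK1_0 hlt hev]
    rw [hone, Matrix.det_one]
  | succ m =>
    intro hlt hev B hB
    have hblock : B
        = (1 : Matrix (Fin (dim (m+1))) (Fin (dim (m+1))) ℝ) + (K2 m - K1 m) * A m := by
      ext s s'
      rw [hB, NM_diag_succ n dim A K1 K2 hdim m hlt hev]
      have h : A (m+1) * K1 (m+1) + K2 m * A m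
          = (1 : Matrix (Fin (dim (m+1))) (Fin (dim (m+1))) ℝ) + (K2 m - K1 m) * A m := by
        rw [eq_sub_of_add_eq (hK1 m), Matrix.sub_mul]
        abel
      rw [h]
    rw [hblock]
    exact (det_one_add_diff dim A K1 K2 hK1_0 hK2_0 hK1 hK2 m).1

lemma torsion_core (n : ℕ) (dim : ℕ → ℕ) (hdim : ∀ i, n < i → dim i = 0)
    (A : ∀ i : ℕ, Matrix (Fin (dim i)) (Fin (dim (i + 1))) ℝ)
    (hcomplex : ∀ i, A i * A (i + 1) = 0)
    (K1 K2 : ∀ i : ℕ, Matrix (Fin (dim (i + 1))) (Fin (dim i)) ℝ)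
    (hK1_0 : A 0 * K1 0 = 1) (hK2_0 : A 0 * K2 0 = 1)
    (hK1 : ∀ i, A (i + 1) * K1 (i + 1) + K1 i * A i = 1)
    (hK2 : ∀ i, A (i + 1) * K2 (i + 1) + K2 i * A i = 1)
    (e : TorsionIdxE n dim ≃ TorsionIdxO n dim) :
    ((torsionMatrixOE n dim A K2).submatrix id e).det
      * ((torsionMatrix n dim A K1).submatrix e id).det = 1 := by
  rw [← Matrix.det_mul, Matrix.submatrix_mul_equiv, Matrix.submatrix_id_id]
  have hbt : (torsionMatrixOE n dim A K2 * torsionMatrix n dim A K1).BlockTriangular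
      (fun x : TorsionIdxE n dim => (n : ℕ) - (x.1.1.1 : ℕ)) := by
    intro x y hxy
    have hy := y.1.1.isLt
    have hxy' : n - (y.1.1.1 : ℕ) < n - (x.1.1.1 : ℕ) := hxy
    exact NM_offdiag n dim A K1 K2 hcomplex x y (by omega)
  rw [hbt.det]
  apply Finset.prod_eq_one
  intro a ha
  obtain ⟨x, -, hx⟩ := Finset.mem_image.mp ha
  obtain ⟨⟨⟨iv, hxlt⟩, hxev⟩, xr⟩ := x
  have hx' : n - iv = a := hx
  clear hx xr ha
  have hkey : ∀ y : TorsionIdxE n dim,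
      ((fun x : TorsionIdxE n dim => (n : ℕ) - (x.1.1.1 : ℕ)) y = a) ↔ (y.1.1.1 : ℕ) = iv := by
    intro y
    have := y.1.1.isLt
    constructor
    · intro h
      have h' : n - (y.1.1.1 : ℕ) = a := h
      omega
    · intro h
      show n - (y.1.1.1 : ℕ) = a
      omega
  let g : Fin (dim iv) ≃
      {y : TorsionIdxE n dim // (fun x : TorsionIdxE n dim => (n : ℕ) - (x.1.1.1 : ℕ)) y = a} :=
    { toFun := fun s => ⟨⟨⟨⟨iv, hxlt⟩, hxev⟩, s⟩, hx'⟩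
      invFun := fun z => Fin.cast (congrArg dim ((hkey z.1).mp z.2)) z.1.2
      left_inv := fun s => rfl
      right_inv := fun z => Subtype.ext (sigmaFinEq _ _
        (((hkey z.1).mp z.2).symm) rfl) }
  rw [← Matrix.det_submatrix_equiv_self g]
  exact block_det n dim hdim A K1 K2 hK1_0 hK2_0 hK1 hK2 iv hxlt hxev _ (fun s s' => rfl)

/- ### transporting the dual contraction back to the original complex -/

lemma one_apply_cast {d d' : ℕ} (h h' : d = d') (a b : Fin d) :
    (1 : Matrix (Fin d') (Fin d') ℝ) (Fin.cast h b) (Fin.cast h' a)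
      = (1 : Matrix (Fin d) (Fin d) ℝ) a b := by
  rw [Matrix.one_apply, Matrix.one_apply]
  exact if_congr ⟨fun hh => Fin.ext (congrArg Fin.val hh).symm,
    fun hh => Fin.ext (congrArg Fin.val hh).symm⟩ rfl rfl

def tK (n : ℕ) (dim : ℕ → ℕ)
    (K' : ∀ i : ℕ, Matrix (Fin (dualDim n dim (i + 1))) (Fin (dualDim n dim i)) ℝ) :
    ∀ i : ℕ, Matrix (Fin (dim (i + 1))) (Fin (dim i)) ℝ :=
  fun i a b =>
    if h : i + 1 ≤ n then
      K' (n - i - 1)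
        (Fin.cast (show dim i = dualDim n dim ((n - i - 1) + 1) by
            rw [dualDim_eq dim (by omega)]; exact congrArg dim (by omega)) b)
        (Fin.cast (show dim (i + 1) = dualDim n dim (n - i - 1) by
            rw [dualDim_eq dim (by omega)]; exact congrArg dim (by omega)) a)
    else 0

lemma tK_app (n : ℕ) (dim : ℕ → ℕ)
    (K' : ∀ i : ℕ, Matrix (Fin (dualDim n dim (i + 1))) (Fin (dualDim n dim i)) ℝ)
    {i : ℕ} (h : i + 1 ≤ n) (a : Fin (dim (i+1))) (b : Fin (dim i)) :
    tK n dim K' i a b = K' (n - i - 1)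
        (Fin.cast (show dim i = dualDim n dim ((n - i - 1) + 1) by
            rw [dualDim_eq dim (by omega)]; exact congrArg dim (by omega)) b)
        (Fin.cast (show dim (i + 1) = dualDim n dim (n - i - 1) by
            rw [dualDim_eq dim (by omega)]; exact congrArg dim (by omega)) a) := by
  simp only [tK]
  rw [dif_pos h]

lemma tK_app_zero (n : ℕ) (dim : ℕ → ℕ)
    (K' : ∀ i : ℕ, Matrix (Fin (dualDim n dim (i + 1))) (Fin (dualDim n dim i)) ℝ)
    {i : ℕ} (h : ¬ i + 1 ≤ n) (a : Fin (dim (i+1))) (b : Fin (dim i)) :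
    tK n dim K' i a b = 0 := by
  simp only [tK]
  rw [dif_neg h]

lemma tK_zero (n : ℕ) (dim : ℕ → ℕ) (hdim : ∀ i, n < i → dim i = 0)
    (A : ∀ i : ℕ, Matrix (Fin (dim i)) (Fin (dim (i + 1))) ℝ)
    (hacyc0 : LinearMap.range (Matrix.mulVecLin (A 0)) = ⊤)
    (K' : ∀ i : ℕ, Matrix (Fin (dualDim n dim (i + 1))) (Fin (dualDim n dim i)) ℝ)
    (hK' : ∀ i, dualA n dim A (i + 1) * K' (i + 1) + K' i * dualA n dim A i = 1) :
    A 0 * tK n dim K' 0 = 1 := by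
  by_cases hn : 1 ≤ n
  · have hb : dim 0 = dualDim n dim (n - 1 + 1) := by
      rw [dualDim_eq dim (by omega)]; exact congrArg dim (by omega)
    ext a b
    have e1 : (A 0 * tK n dim K' 0) a b
        = (K' (n-1) * dualA n dim A (n-1)) (Fin.cast hb b) (Fin.cast hb a) := by
      rw [Matrix.mul_apply, Matrix.mul_apply]
      apply Fintype.sum_equiv (finCongr (show dim (0+1) = dualDim n dim (n-1) by
        rw [dualDim_eq dim (by omega)]; exact congrArg dim (by omega)))
      intro c
      rw [tK_app n dim K' (by omega : 0 + 1 ≤ n), dualA_app n dim A (by omega : (n-1) + 1 ≤ n),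
        mul_comm]
      refine congrArg₂ (· * ·) ?_ ?_
      · exact famCast (d := fun k => dualDim n dim (k+1)) K' (by omega : n - 0 - 1 = n - 1) rfl rfl
      · exact famCast A (by omega : (0 : ℕ) = n - (n-1) - 1) rfl rfl
    rw [e1]
    have hp := congrFun (congrFun (hK' (n-1)) (Fin.cast hb b)) (Fin.cast hb a)
    rw [Matrix.add_apply] at hp
    have hz : (dualA n dim A (n-1+1) * K' (n-1+1)) (Fin.cast hb b) (Fin.cast hb a) = 0 := by
      rw [Matrix.mul_apply]
      apply Finset.sum_eq_zero
      intro c _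
      rw [dualA_zero n dim A (by omega : ¬ (n-1+1) + 1 ≤ n), zero_mul]
    rw [hz, zero_add] at hp
    rw [hp]
    exact one_apply_cast hb hb a b
  · have hd0 : dim 0 = 0 := by
      by_contra hne
      obtain ⟨y, hy⟩ := (LinearMap.range_eq_top.mp hacyc0) (fun _ => 1)
      have h1 := congrFun hy ⟨0, Nat.pos_of_ne_zero hne⟩
      rw [Matrix.mulVecLin_apply] at h1
      have h2 : (A 0).mulVec y ⟨0, Nat.pos_of_ne_zero hne⟩ = 0 := by
        rw [Matrix.mulVec]
        apply Finset.sum_eq_zero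
        intro c _
        exact absurd c.isLt (by have := hdim (0+1) (by omega); omega)
      rw [h2] at h1
      norm_num at h1
    ext a b
    exact absurd a.isLt (by omega)

lemma tK_contr (n : ℕ) (dim : ℕ → ℕ) (hdim : ∀ i, n < i → dim i = 0)
    (A : ∀ i : ℕ, Matrix (Fin (dim i)) (Fin (dim (i + 1))) ℝ)
    (K' : ∀ i : ℕ, Matrix (Fin (dualDim n dim (i + 1))) (Fin (dualDim n dim i)) ℝ)
    (hK'0 : dualA n dim A 0 * K' 0 = 1)
    (hK' : ∀ i, dualA n dim A (i + 1) * K' (i + 1) + K' i * dualA n dim A i = 1) :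
    ∀ i, A (i + 1) * tK n dim K' (i + 1) + tK n dim K' i * A i = 1 := by
  intro i
  by_cases hc : i + 2 ≤ n
  · have hb : dim (i+1) = dualDim n dim (n - i - 2 + 1) := by
      rw [dualDim_eq dim (by omega)]; exact congrArg dim (by omega)
    ext a b
    have e1 : (A (i+1) * tK n dim K' (i+1)) a b
        = (K' (n-i-2) * dualA n dim A (n-i-2)) (Fin.cast hb b) (Fin.cast hb a) := by
      rw [Matrix.mul_apply, Matrix.mul_apply]
      apply Fintype.sum_equiv (finCongr (show dim (i+1+1) = dualDim n dim (n-i-2) by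
        rw [dualDim_eq dim (by omega)]; exact congrArg dim (by omega)))
      intro c
      rw [tK_app n dim K' (by omega : (i+1) + 1 ≤ n), dualA_app n dim A (by omega : (n-i-2) + 1 ≤ n),
        mul_comm]
      refine congrArg₂ (· * ·) ?_ ?_
      · exact famCast (d := fun k => dualDim n dim (k+1)) K'
          (by omega : n - (i+1) - 1 = n - i - 2) rfl rfl
      · exact famCast A (by omega : i + 1 = n - (n-i-2) - 1) rfl rfl
    have e2 : (tK n dim K' i * A i) a b
        = (dualA n dim A (n-i-2+1) * K' (n-i-2+1)) (Fin.cast hb b) (Fin.cast hb a) := by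
      rw [Matrix.mul_apply, Matrix.mul_apply]
      apply Fintype.sum_equiv (finCongr (show dim i = dualDim n dim (n-i-2+1+1) by
        rw [dualDim_eq dim (by omega)]; exact congrArg dim (by omega)))
      intro c
      rw [tK_app n dim K' (by omega : i + 1 ≤ n), dualA_app n dim A (by omega : (n-i-2+1) + 1 ≤ n),
        mul_comm]
      refine congrArg₂ (· * ·) ?_ ?_
      · exact famCast A (by omega : i = n - (n-i-2+1) - 1) rfl rfl
      · exact famCast (d := fun k => dualDim n dim (k+1)) K'
          (by omega : n - i - 1 = n - i - 2 + 1) rfl rfl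
    have hp := congrFun (congrFun (hK' (n-i-2)) (Fin.cast hb b)) (Fin.cast hb a)
    rw [Matrix.add_apply] at hp
    rw [Matrix.add_apply, e1, e2, add_comm, hp]
    exact one_apply_cast hb hb a b
  · by_cases hc1 : i + 1 ≤ n
    · have hb : dim (i+1) = dualDim n dim 0 := by
        rw [dualDim_eq dim (by omega)]; exact congrArg dim (by omega)
      ext a b
      have hz : (A (i+1) * tK n dim K' (i+1)) a b = 0 := by
        rw [Matrix.mul_apply]
        apply Finset.sum_eq_zero
        intro c _
        rw [tK_app_zero n dim K' (by omega : ¬ (i+1) + 1 ≤ n), mul_zero]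
      have e2 : (tK n dim K' i * A i) a b
          = (dualA n dim A 0 * K' 0) (Fin.cast hb b) (Fin.cast hb a) := by
        rw [Matrix.mul_apply, Matrix.mul_apply]
        apply Fintype.sum_equiv (finCongr (show dim i = dualDim n dim (0+1) by
          rw [dualDim_eq dim (by omega)]; exact congrArg dim (by omega)))
        intro c
        rw [tK_app n dim K' (by omega : i + 1 ≤ n), dualA_app n dim A (by omega : 0 + 1 ≤ n),
          mul_comm]
        refine congrArg₂ (· * ·) ?_ ?_
        · exact famCast A (by omega : i = n - 0 - 1) rfl rfl
        · exact famCast (d := fun k => dualDim n dim (k+1)) K'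
            (by omega : n - i - 1 = 0) rfl rfl
      have hp := congrFun (congrFun hK'0 (Fin.cast hb b)) (Fin.cast hb a)
      rw [Matrix.add_apply, hz, zero_add, e2, hp]
      exact one_apply_cast hb hb a b
    · ext a b
      exact absurd a.isLt (by have := hdim (i+1) (by omega); omega)

/- ### degree-flip equivalences -/

def flipIdx (n : ℕ) (dim : ℕ → ℕ) (P Q : ℕ → Prop)
    (hPQ : ∀ j, j ≤ n → (P j ↔ Q (n - j))) :
    (Σ i : {i : Fin (n+1) // P i.1}, Fin (dualDim n dim i.1.1)) ≃
    (Σ i : {i : Fin (n+1) // Q i.1}, Fin (dim i.1.1)) where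
  toFun x := ⟨⟨⟨n - (x.1.1.1 : ℕ), by omega⟩,
      (hPQ _ (by have := x.1.1.isLt; omega)).mp x.1.2⟩,
    Fin.cast (dualDim_eq dim (by have := x.1.1.isLt; omega)) x.2⟩
  invFun y := ⟨⟨⟨n - (y.1.1.1 : ℕ), by omega⟩,
      (hPQ _ (by omega)).mpr (by
        rw [Nat.sub_sub_self (by have := y.1.1.isLt; omega : (y.1.1.1 : ℕ) ≤ n)]
        exact y.1.2)⟩,
    Fin.cast (show dim (y.1.1.1 : ℕ) = dualDim n dim (n - (y.1.1.1 : ℕ)) by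
      rw [dualDim_eq dim (by omega)]
      exact congrArg dim (by have := y.1.1.isLt; omega)) y.2⟩
  left_inv x := sigmaFinEq _ _
    (by have := x.1.1.isLt; show n - (n - (x.1.1.1 : ℕ)) = (x.1.1.1 : ℕ); omega) rfl
  right_inv y := sigmaFinEq _ _
    (by have := y.1.1.isLt; show n - (n - (y.1.1.1 : ℕ)) = (y.1.1.1 : ℕ); omega) rfl

/- ### pullback of the dual torsion matrix -/

lemma pullback_even (n : ℕ) (dim : ℕ → ℕ)
    (A : ∀ i : ℕ, Matrix (Fin (dim i)) (Fin (dim (i + 1))) ℝ)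
    (K' : ∀ i : ℕ, Matrix (Fin (dualDim n dim (i + 1))) (Fin (dualDim n dim i)) ℝ)
    (hEE : ∀ j, j ≤ n → (Even j ↔ Even (n - j)))
    (hOO : ∀ j, j ≤ n → (¬ Even j ↔ ¬ Even (n - j)))
    (x : TorsionIdxO n (dualDim n dim)) (y : TorsionIdxE n (dualDim n dim)) :
    torsionMatrix n (dualDim n dim) (dualA n dim A) K' x y
      = torsionMatrixOE n dim A (tK n dim K')
          (flipIdx n dim Even Even hEE y)
          (flipIdx n dim (fun k => ¬ Even k) (fun k => ¬ Even k) hOO x) := by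
  obtain ⟨⟨⟨j, hj⟩, hoj⟩, r⟩ := x
  obtain ⟨⟨⟨i, hi⟩, hei⟩, s⟩ := y
  simp only [flipIdx, Equiv.coe_fn_mk]
  by_cases h1 : i = j + 1
  · rw [M_app_A n (dualDim n dim) (dualA n dim A) K' h1,
      OE_app_A n dim A (tK n dim K') (by omega : n - j = (n - i) + 1),
      dualA_app n dim A (by omega : j + 1 ≤ n)]
    exact famCast A (by omega : n - j - 1 = n - i) rfl rfl
  · by_cases h2 : j = i + 1
    · rw [M_app_K n (dualDim n dim) (dualA n dim A) K' h2,
        OE_app_K n dim A (tK n dim K') (by omega : n - i = (n - j) + 1),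
        tK_app n dim K' (by omega : (n - j) + 1 ≤ n)]
      exact famCast (d := fun k => dualDim n dim (k+1)) K'
        (by omega : i = n - (n - j) - 1) rfl rfl
    · rw [M_app_zero n (dualDim n dim) (dualA n dim A) K' h1 h2,
        OE_app_zero n dim A (tK n dim K') (by omega) (by omega)]

lemma pullback_odd (n : ℕ) (dim : ℕ → ℕ)
    (A : ∀ i : ℕ, Matrix (Fin (dim i)) (Fin (dim (i + 1))) ℝ)
    (K' : ∀ i : ℕ, Matrix (Fin (dualDim n dim (i + 1))) (Fin (dualDim n dim i)) ℝ)
    (hEO : ∀ j, j ≤ n → (Even j ↔ ¬ Even (n - j)))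
    (hOE : ∀ j, j ≤ n → (¬ Even j ↔ Even (n - j)))
    (x : TorsionIdxO n (dualDim n dim)) (y : TorsionIdxE n (dualDim n dim)) :
    torsionMatrix n (dualDim n dim) (dualA n dim A) K' x y
      = torsionMatrix n dim A (tK n dim K')
          (flipIdx n dim Even (fun k => ¬ Even k) hEO y)
          (flipIdx n dim (fun k => ¬ Even k) Even hOE x) := by
  obtain ⟨⟨⟨j, hj⟩, hoj⟩, r⟩ := x
  obtain ⟨⟨⟨i, hi⟩, hei⟩, s⟩ := y
  simp only [flipIdx, Equiv.coe_fn_mk]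
  by_cases h1 : i = j + 1
  · rw [M_app_A n (dualDim n dim) (dualA n dim A) K' h1,
      M_app_A n dim A (tK n dim K') (by omega : n - j = (n - i) + 1),
      dualA_app n dim A (by omega : j + 1 ≤ n)]
    exact famCast A (by omega : n - j - 1 = n - i) rfl rfl
  · by_cases h2 : j = i + 1
    · rw [M_app_K n (dualDim n dim) (dualA n dim A) K' h2,
        M_app_K n dim A (tK n dim K') (by omega : n - i = (n - j) + 1),
        tK_app n dim K' (by omega : (n - j) + 1 ≤ n)]
      exact famCast (d := fun k => dualDim n dim (k+1)) K'
        (by omega : i = n - (n - j) - 1) rfl rfl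
    · rw [M_app_zero n (dualDim n dim) (dualA n dim A) K' h1 h2,
        M_app_zero n dim A (tK n dim K') (by omega) (by omega)]

/-- Duality for the torsion of an acyclic based chain complex of real vector spaces:
if `C` is the acyclic complex with `C_i = ℝ^{dim i}` (trivial above degree `n`) and
boundary matrices `A`, and `C^∨` is the dual complex (with `(C^∨)_{n−k} = ℝ^{dim k}` and
transposed boundary matrices), then `C^∨` is again an acyclic chain complex, and for all
chain contractions `K` of `C` and `K'` of `C^∨` squaring to zero (the torsions
`τ = |det (∂+κ)_{even→odd}|` do not depend on these choices), one has
`τ(C^∨) = τ(C)^{(−1)^{n+1}}`. -/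
theorem torsion_duality (n : ℕ) (dim : ℕ → ℕ) (hdim : ∀ i, n < i → dim i = 0)
    (A : ∀ i : ℕ, Matrix (Fin (dim i)) (Fin (dim (i + 1))) ℝ)
    (hcomplex : ∀ i, A i * A (i + 1) = 0)
    (hacyc0 : LinearMap.range (Matrix.mulVecLin (A 0)) = ⊤)
    (hacyc : ∀ i, LinearMap.ker (Matrix.mulVecLin (A i))
      = LinearMap.range (Matrix.mulVecLin (A (i + 1))))
    (K : ∀ i : ℕ, Matrix (Fin (dim (i + 1))) (Fin (dim i)) ℝ)
    (hK0 : A 0 * K 0 = 1)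
    (hK : ∀ i, A (i + 1) * K (i + 1) + K i * A i = 1)
    (hKK : ∀ i, K (i + 1) * K i = 0)
    (K' : ∀ i : ℕ, Matrix (Fin (dualDim n dim (i + 1))) (Fin (dualDim n dim i)) ℝ)
    (hK'0 : dualA n dim A 0 * K' 0 = 1)
    (hK' : ∀ i, dualA n dim A (i + 1) * K' (i + 1) + K' i * dualA n dim A i = 1)
    (hK'K' : ∀ i, K' (i + 1) * K' i = 0)
    (e : TorsionIdxE n dim ≃ TorsionIdxO n dim)
    (e' : TorsionIdxE n (dualDim n dim) ≃ TorsionIdxO n (dualDim n dim)) :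
    (∀ j, dualA n dim A j * dualA n dim A (j + 1) = 0) ∧
    LinearMap.range (Matrix.mulVecLin (dualA n dim A 0)) = ⊤ ∧
    (∀ j, LinearMap.ker (Matrix.mulVecLin (dualA n dim A j))
      = LinearMap.range (Matrix.mulVecLin (dualA n dim A (j + 1)))) ∧
    |((torsionMatrix n (dualDim n dim) (dualA n dim A) K').submatrix e' id).det|
      = |((torsionMatrix n dim A K).submatrix e id).det| ^ ((-1 : ℤ) ^ (n + 1)) := by
  refine ⟨dual_complex n dim A hcomplex, dual_acyc0 n dim A K' hK'0,
    dual_acyc n dim A hcomplex K' hK', ?_⟩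
  have htK0 : A 0 * tK n dim K' 0 = 1 := tK_zero n dim hdim A hacyc0 K' hK'
  have htK : ∀ i, A (i + 1) * tK n dim K' (i + 1) + tK n dim K' i * A i = 1 :=
    tK_contr n dim hdim A K' hK'0 hK'
  by_cases hn : Even n
  · -- n even : τ(C^∨) = τ(C)⁻¹
    have hEE : ∀ j, j ≤ n → (Even j ↔ Even (n - j)) := fun j hj => by
      rw [Nat.even_sub hj]
      exact ⟨fun h => iff_of_true hn h, fun h => h.mp hn⟩
    have hOO : ∀ j, j ≤ n → (¬ Even j ↔ ¬ Even (n - j)) := fun j hj =>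
      not_congr (hEE j hj)
    set fE := flipIdx n dim Even Even hEE with hfE
    set fO := flipIdx n dim (fun k => ¬ Even k) (fun k => ¬ Even k) hOO with hfO
    have hpull : (torsionMatrix n (dualDim n dim) (dualA n dim A) K').submatrix e' id
        = ((torsionMatrixOE n dim A (tK n dim K'))ᵀ).submatrix (e'.trans fO) fE := by
      ext u v
      exact pullback_even n dim A K' hEE hOO (e' u) v
    have habs : |(((torsionMatrixOE n dim A (tK n dim K'))ᵀ).submatrix (e'.trans fO) fE).det|
        = |(((torsionMatrixOE n dim A (tK n dim K'))ᵀ).submatrix e (Equiv.refl _)).det| :=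
      abs_det_submatrix_eq _ _ _ _ _
    have htr : ((torsionMatrixOE n dim A (tK n dim K'))ᵀ).submatrix (⇑e) (⇑(Equiv.refl (TorsionIdxE n dim)))
        = ((torsionMatrixOE n dim A (tK n dim K')).submatrix id (⇑e))ᵀ := by
      ext u v
      rfl
    have hcore := torsion_core n dim hdim A hcomplex K (tK n dim K') hK0 htK0 hK htK e
    have hexp : ((-1 : ℤ) ^ (n + 1)) = -1 := Odd.neg_one_pow (Even.add_one hn)
    rw [hexp, zpow_neg_one, hpull]
    rw [habs, htr, Matrix.det_transpose]
    exact eq_inv_of_mul_eq_one_left (by rw [← abs_mul, hcore, abs_one])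
  · -- n odd : τ(C^∨) = τ(C)
    have hEO : ∀ j, j ≤ n → (Even j ↔ ¬ Even (n - j)) := fun j hj => by
      rw [Nat.even_sub hj]
      tauto
    have hOE : ∀ j, j ≤ n → (¬ Even j ↔ Even (n - j)) := fun j hj => by
      rw [Nat.even_sub hj]
      tauto
    set fEO := flipIdx n dim Even (fun k => ¬ Even k) hEO with hfEO
    set fOE := flipIdx n dim (fun k => ¬ Even k) Even hOE with hfOE
    have hpull : (torsionMatrix n (dualDim n dim) (dualA n dim A) K').submatrix e' id
        = ((torsionMatrix n dim A (tK n dim K'))ᵀ).submatrix (e'.trans fOE) fEO := by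
      ext u v
      exact pullback_odd n dim A K' hEO hOE (e' u) v
    have habs : |(((torsionMatrix n dim A (tK n dim K'))ᵀ).submatrix (e'.trans fOE) fEO).det|
        = |(((torsionMatrix n dim A (tK n dim K'))ᵀ).submatrix (Equiv.refl _) e).det| :=
      abs_det_submatrix_eq _ _ _ _ _
    have htr : ((torsionMatrix n dim A (tK n dim K'))ᵀ).submatrix (⇑(Equiv.refl (TorsionIdxE n dim))) (⇑e)
        = ((torsionMatrix n dim A (tK n dim K')).submatrix (⇑e) id)ᵀ := by
      ext u v
      rfl
    have core1 := torsion_core n dim hdim A hcomplex (tK n dim K') K htK0 hK0 htK hK e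
    have core2 := torsion_core n dim hdim A hcomplex K K hK0 hK0 hK hK e
    have hne : ((torsionMatrixOE n dim A K).submatrix id e).det ≠ 0 :=
      left_ne_zero_of_mul_eq_one core1
    have hdet : ((torsionMatrix n dim A (tK n dim K')).submatrix e id).det
        = ((torsionMatrix n dim A K).submatrix e id).det :=
      mul_left_cancel₀ hne (core1.trans core2.symm)
    have hexp : ((-1 : ℤ) ^ (n + 1)) = 1 :=
      Even.neg_one_pow (Nat.even_add_one.mpr hn)
    rw [hexp, zpow_one, hpull, habs, htr, Matrix.det_transpose, hdet]
end

section
/- Analytic torsion of the circle: Fix ψ ∈ ℝ with 0 < ψ < 2π. Let ζ(s, a) denote the Hurwitz zeta function, the meromorphic continuation in s of ∑_{k≥0} (k + a)^{−s}. Define Z(s) = 2·(2π)^{−2s}·( ζ(2s, ψ/(2π)) + ζ(2s, 1 − ψ/(2π)) ), the zeta function of the Laplacian on the flat O(2)-bundle over S¹ with holonomy angle ψ. Then Z is differentiable at s = 0 and the zeta-regularized determinant exp(−Z′(0)) equals (2·sin(ψ/2))⁴; equivalently, the corresponding Ray–Singer torsion exp(−Z′(0))^{1/2} = (2·sin(ψ/2))²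 = |e^{iψ} − 1|². -/
/-!
Near `s = 0` the functional equation gives
`(2π)^{-2s} ζ_even(2s, a) = Γ(1 - 2s) cosZeta(a, 1 - 2s) sin(πs) / π`, and `sin(πs)` vanishes
at `0`, so `Z'(0) = 4 cosZeta(a, 1)` with `a = ψ/2π`. It remains to evaluate
`cosZeta(a, 1) = ∑ cos(2πna)/n = -log |2 sin(πa)|`, the real part of `-log(1 - e^{2πia})`.
Summed by parts, the Dirichlet series `∑ wⁿ n^{-σ}` (`|w| = 1`, `w ≠ 1`) becomes a series
dominated uniformly for `σ ∈ [1, 2]`, so its value at `σ = 1` is the limit of `expZeta(a, σ)`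
as `σ → 1⁺`; Abel's limit theorem identifies that value with `-log(1 - w)`.
-/

open Complex Filter Finset Topology HurwitzZeta
open scoped Real

section DirichletTest
variable {E : Type*} [NormedAddCommGroup E] [NormedSpace ℝ E] [CompleteSpace E]
  {f : ℕ → ℝ} {z : ℕ → E} {b : ℝ}

theorem Antitone.tendsto_sum_range_smul_of_tendsto_zero_of_bounded (hfa : Antitone f)
    (hf0 : Tendsto f atTop (𝓝 0)) (hzb : ∀ n, ‖∑ i ∈ range n, z i‖ ≤ b) :
    Tendsto (fun n ↦ ∑ i ∈ range n, f i • z i) atTop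
      (𝓝 (∑' n, (f n - f (n + 1)) • ∑ i ∈ range (n + 1), z i)) := by
  have hdiff : ∀ n, 0 ≤ f n - f (n + 1) := fun n ↦ sub_nonneg.2 (hfa n.le_succ)
  have hsummable : Summable fun n ↦ (f n - f (n + 1)) • ∑ i ∈ range (n + 1), z i := by
    refine Summable.of_norm_bounded (g := fun n ↦ b * (f n - f (n + 1))) (Summable.mul_left b ?_)
      fun n ↦ ?_
    · refine summable_of_sum_range_le (c := f 0) hdiff fun n ↦ ?_
      rw [sum_range_sub']
      linarith [hfa.le_of_tendsto hf0 n]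
    · rw [norm_smul, Real.norm_of_nonneg (hdiff n), mul_comm]
      exact mul_le_mul_of_nonneg_right (hzb _) (hdiff n)
  have hboundary : Tendsto (fun n ↦ f (n - 1) • ∑ i ∈ range n, z i) atTop (𝓝 0) :=
    NormedField.tendsto_zero_smul_of_tendsto_zero_of_bounded
      (hf0.comp (tendsto_sub_atTop_nat 1)) (isBoundedUnder_of ⟨b, hzb⟩)
  have := hboundary.add (hsummable.hasSum.tendsto_sum_nat.comp (tendsto_sub_atTop_nat 1))
  rw [zero_add] at this
  refine this.congr fun n ↦ ?_
  rw [sum_range_by_parts, sub_eq_add_neg, ← sum_neg_distrib]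
  simp only [Function.comp_apply, ← neg_smul, neg_sub]
end DirichletTest

lemma norm_sum_range_pow_succ_le {w : ℂ} (hw : ‖w‖ = 1) (hw1 : w ≠ 1) (n : ℕ) :
    ‖∑ i ∈ range n, w ^ (i + 1)‖ ≤ 2 / ‖1 - w‖ := by
  have hsum : ∑ i ∈ range n, w ^ (i + 1) = w * ((w ^ n - 1) / (w - 1)) := by
    simp only [pow_succ', ← mul_sum, geom_sum_eq hw1]
  rw [hsum, norm_mul, hw, one_mul, norm_div, norm_sub_rev w 1]
  gcongr
  calc ‖w ^ n - 1‖ ≤ ‖w ^ n‖ + ‖(1 : ℂ)‖ := norm_sub_le _ _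
    _ = 2 := by rw [norm_pow, hw, one_pow, norm_one]; norm_num

lemma one_sub_mem_slitPlane {w : ℂ} (hw : ‖w‖ = 1) (hw1 : w ≠ 1) : 1 - w ∈ slitPlane := by
  rw [mem_slitPlane_iff, sub_re, one_re, sub_im, one_im]
  by_contra! h
  have hre : w.re = 1 := le_antisymm (hw ▸ re_le_norm w) (by linarith [h.1])
  have him : w.im = 0 := by
    have := normSq_eq_norm_sq w
    rw [hw, normSq_apply, hre] at this
    nlinarith
  exact hw1 (Complex.ext hre him)

lemma rpow_neg_sub_rpow_neg_le {x σ : ℝ} (hx : 1 ≤ x) (hσ₁ : 1 ≤ σ) (hσ₂ : σ ≤ 2) :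
    x ^ (-σ) - (x + 1) ^ (-σ) ≤ 2 / x ^ 2 := by
  have hx0 : 0 < x := by linarith
  set r := x / (x + 1) with hr
  have hr0 : 0 < r := by positivity
  have hr1 : r ≤ 1 := (div_le_one (by linarith)).2 (by linarith)
  have hfactor : x ^ (-σ) - (x + 1) ^ (-σ) = x ^ (-σ) * (1 - r ^ σ) := by
    rw [hr, Real.div_rpow hx0.le (by linarith), Real.rpow_neg hx0.le, Real.rpow_neg (by linarith)]
    field_simp
  have hxσ : x ^ (-σ) ≤ x⁻¹ := by
    rw [← Real.rpow_neg_one]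
    exact Real.rpow_le_rpow_of_exponent_le hx (by linarith)
  have hrσ : r ^ (2 : ℝ) ≤ r ^ σ := Real.rpow_le_rpow_of_exponent_ge hr0 hr1 hσ₂
  have hrσ1 : r ^ σ ≤ 1 := Real.rpow_le_one hr0.le hr1 (by linarith)
  rw [Real.rpow_two] at hrσ
  have h1r : 1 - r = (x + 1)⁻¹ := by rw [hr]; field_simp; ring
  rw [hfactor]
  calc x ^ (-σ) * (1 - r ^ σ) ≤ x⁻¹ * (2 * (1 - r)) := by
        refine mul_le_mul hxσ ?_ (by linarith) (by positivity)
        nlinarith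
    _ ≤ 2 / x ^ 2 := by
        rw [h1r]
        have : (x + 1)⁻¹ ≤ x⁻¹ := inv_anti₀ hx0 (by linarith)
        calc x⁻¹ * (2 * (x + 1)⁻¹) ≤ x⁻¹ * (2 * x⁻¹) := by gcongr
          _ = 2 / x ^ 2 := by field_simp

/-- `∑ₙ₌₁ wⁿ n^{-σ}` after summation by parts. -/
noncomputable def polylogByParts (w : ℂ) (σ : ℝ) : ℂ :=
  let f : ℕ → ℝ := fun n ↦ ((n : ℝ) + 1) ^ (-σ)
  ∑' n, (f n - f (n + 1)) • ∑ i ∈ range (n + 1), w ^ (i + 1)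

lemma tendsto_sum_range_polylogByParts {w : ℂ} (hw : ‖w‖ = 1) (hw1 : w ≠ 1) {σ : ℝ}
    (hσ : 0 < σ) :
    Tendsto (fun N ↦ ∑ n ∈ range N, ((n : ℝ) + 1) ^ (-σ) • w ^ (n + 1)) atTop
      (𝓝 (polylogByParts w σ)) := by
  refine Antitone.tendsto_sum_range_smul_of_tendsto_zero_of_bounded (b := 2 / ‖1 - w‖)
    (fun m n hmn ↦ ?_) ?_ (norm_sum_range_pow_succ_le hw hw1)
  · exact Real.rpow_le_rpow_of_nonpos (by positivity) (by gcongr) (by linarith)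
  · exact (tendsto_rpow_neg_atTop hσ).comp
      (tendsto_atTop_add_const_right _ 1 tendsto_natCast_atTop_atTop)

lemma polylogByParts_one {w : ℂ} (hw : ‖w‖ = 1) (hw1 : w ≠ 1) :
    polylogByParts w 1 = -log (1 - w) := by
  have hpartial : Tendsto (fun N ↦ ∑ n ∈ range N, w ^ n / n) atTop (𝓝 (polylogByParts w 1)) := by
    rw [← tendsto_add_atTop_iff_nat 1]
    refine (tendsto_sum_range_polylogByParts hw hw1 one_pos).congr fun N ↦ ?_
    rw [sum_range_succ']
    simp [Real.rpow_neg_one, div_eq_inv_mul]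
  have habel := Complex.tendsto_tsum_powerSeries_nhdsWithin_lt hpartial
  have hlog : Tendsto (fun x : ℂ ↦ -log (1 - x * w)) ((𝓝[<] (1 : ℝ)).map ofReal)
      (𝓝 (-log (1 - w))) := by
    have : ContinuousAt (fun x : ℂ ↦ -log (1 - x * w)) 1 :=
      ((continuousAt_clog (by simpa using one_sub_mem_slitPlane hw hw1)).comp
        (by fun_prop)).neg
    simpa using this.tendsto.comp ((continuous_ofReal.tendsto 1).mono_left nhdsWithin_le_nhds)
  refine tendsto_nhds_unique (habel.congr' ?_) hlog
  rw [eventuallyEq_map]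
  filter_upwards [Ioo_mem_nhdsLT (show (0 : ℝ) < 1 by norm_num)] with x hx
  have hxw : ‖(x : ℂ) * w‖ < 1 := by
    rw [norm_mul, hw, mul_one, norm_real, Real.norm_of_nonneg hx.1.le]
    exact hx.2
  simp only [Function.comp_apply, ← (hasSum_taylorSeries_neg_log hxw).tsum_eq, mul_pow]
  exact tsum_congr fun n ↦ by ring

lemma tendsto_polylogByParts_nhdsGT_one {w : ℂ} (hw : ‖w‖ = 1) (hw1 : w ≠ 1) :
    Tendsto (polylogByParts w) (𝓝[>] 1) (𝓝 (polylogByParts w 1)) := by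
  refine tendsto_tsum_of_dominated_convergence
    (bound := fun n ↦ 2 / ((n : ℝ) + 1) ^ 2 * (2 / ‖1 - w‖)) ?_ (fun n ↦ ?_) ?_
  · refine Summable.mul_right _ (Summable.mul_left 2 ?_)
    simpa [one_div] using (summable_nat_add_iff 1).2 (Real.summable_one_div_nat_pow.2 one_lt_two)
  · have hcont : ∀ m : ℕ, ContinuousAt (fun σ : ℝ ↦ ((m : ℝ) + 1) ^ (-σ)) 1 := fun m ↦
      (Real.continuousAt_const_rpow (by positivity)).comp continuousAt_neg
    exact (((hcont n).sub (hcont (n + 1))).smul continuousAt_const).tendsto.mono_left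
      nhdsWithin_le_nhds
  · filter_upwards [Ioo_mem_nhdsGT (show (1 : ℝ) < 2 by norm_num)] with σ hσ n
    have hpos : 0 ≤ ((n : ℝ) + 1) ^ (-σ) - ((n + 1 : ℕ) + 1 : ℝ) ^ (-σ) :=
      sub_nonneg.2 (Real.rpow_le_rpow_of_nonpos (by positivity) (by simp) (by linarith [hσ.1]))
    rw [norm_smul, Real.norm_of_nonneg hpos]
    refine mul_le_mul ?_ (norm_sum_range_pow_succ_le hw hw1 _) (norm_nonneg _) (by positivity)
    have := rpow_neg_sub_rpow_neg_le (x := (n : ℝ) + 1) (by simp) hσ.1.le hσ.2.le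
    push_cast at this ⊢
    linarith

lemma norm_exp_two_pi_I_mul (a : ℝ) : ‖cexp (2 * π * I * a)‖ = 1 := by
  simpa [mul_comm, mul_assoc, mul_left_comm] using norm_exp_ofReal_mul_I (2 * π * a)

lemma exp_two_pi_I_mul_ne_one {a : ℝ} (ha : (a : UnitAddCircle) ≠ 0) :
    cexp (2 * π * I * a) ≠ 1 := by
  rw [Ne, exp_eq_one_iff]
  rintro ⟨n, hn⟩
  have han : (a : ℂ) = n := by
    have h2πI : 2 * (π : ℂ) * I ≠ 0 := by simp [Real.pi_ne_zero]
    exact mul_left_cancel₀ h2πI (by rw [hn]; ring)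
  refine ha ((AddCircle.coe_eq_zero_iff _).2 ⟨n, ?_⟩)
  simpa using (ofReal_injective (by simpa using han)).symm

namespace HurwitzZeta

lemma expZeta_ofReal_eq_polylogByParts (a : ℝ) {σ : ℝ} (hσ : 1 < σ)
    (hw1 : cexp (2 * π * I * a) ≠ 1) :
    expZeta a σ = polylogByParts (cexp (2 * π * I * a)) σ := by
  have hseries := (hasSum_expZeta_of_one_lt_re a (s := σ) (by simpa using hσ)).tendsto_sum_nat
  rw [← tendsto_add_atTop_iff_nat 1] at hseries
  refine tendsto_nhds_unique hseries <|
    (tendsto_sum_range_polylogByParts (norm_exp_two_pi_I_mul a) hw1 (by linarith)).congr fun N ↦ ?_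
  have hσ0 : (σ : ℂ) ≠ 0 := by exact_mod_cast (by linarith : σ ≠ 0)
  rw [sum_range_succ', Nat.cast_zero, zero_cpow hσ0, div_zero, add_zero]
  refine sum_congr rfl fun n _ ↦ ?_
  rw [Complex.real_smul, ofReal_cpow (by positivity), ofReal_neg, cpow_neg, ← exp_nat_mul,
    div_eq_inv_mul]
  push_cast
  ring_nf

lemma expZeta_one {a : ℝ} (ha : (a : UnitAddCircle) ≠ 0) :
    expZeta a 1 = -log (1 - cexp (2 * π * I * a)) := by
  have hw := norm_exp_two_pi_I_mul a
  have hw1 := exp_two_pi_I_mul_ne_one ha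
  have hcont : Tendsto (fun σ : ℝ ↦ expZeta a σ) (𝓝[>] 1) (𝓝 (expZeta a 1)) := by
    have := ((differentiable_expZeta_of_ne_zero ha).continuous.tendsto 1).comp
      ((continuous_ofReal.tendsto 1).mono_left (nhdsWithin_le_nhds (s := Set.Ioi 1)))
    simpa [Function.comp_def] using this
  rw [← polylogByParts_one hw hw1]
  refine tendsto_nhds_unique hcont ((tendsto_polylogByParts_nhdsGT_one hw hw1).congr' ?_)
  filter_upwards [self_mem_nhdsWithin] with σ hσ
  exact (expZeta_ofReal_eq_polylogByParts a hσ hw1).symm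

lemma cosZeta_one {a : ℝ} (ha : (a : UnitAddCircle) ≠ 0) :
    cosZeta a 1 = -Real.log |2 * Real.sin (π * a)| := by
  have hneg : ((-a : ℝ) : UnitAddCircle) ≠ 0 := by rwa [AddCircle.coe_neg, neg_ne_zero]
  have hconj : 1 - cexp (2 * π * I * (-a : ℝ)) = starRingEnd ℂ (1 - cexp (2 * π * I * a)) := by
    rw [map_sub, map_one, ← exp_conj]
    congr 2
    simp [map_ofNat]
  have hslit := one_sub_mem_slitPlane (norm_exp_two_pi_I_mul a) (exp_two_pi_I_mul_ne_one ha)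
  have hnorm : ‖1 - cexp (2 * π * I * a)‖ = |2 * Real.sin (π * a)| := by
    rw [norm_sub_rev, ← Real.norm_eq_abs, show π * a = 2 * π * a / 2 by ring,
      ← norm_exp_I_mul_ofReal_sub_one]
    push_cast
    ring_nf
  rw [cosZeta_eq, ← AddCircle.coe_neg, expZeta_one ha, expZeta_one hneg, hconj,
    log_conj _ (slitPlane_arg_ne_pi hslit), ← neg_add, add_conj, log_re, hnorm]
  push_cast
  ring

lemma hurwitzZeta_add_hurwitzZeta_neg (a : UnitAddCircle) (s : ℂ) :
    hurwitzZeta a s + hurwitzZeta (-a) s = 2 * hurwitzZetaEven a s := by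
  simp only [hurwitzZeta, hurwitzZetaEven_neg, hurwitzZetaOdd_neg]
  ring

lemma cpow_mul_hurwitzZetaEven_two_mul {a : UnitAddCircle} (ha : a ≠ 0) {s : ℂ}
    (hs : s.re < 1 / 2) :
    (2 * π : ℂ) ^ (-2 * s) * hurwitzZetaEven a (2 * s) =
      Gamma (1 - 2 * s) * cosZeta a (1 - 2 * s) / π * sin (π * s) := by
  have hs' : ∀ n : ℕ, 1 - 2 * s ≠ -n := fun n h ↦ by
    have := congrArg re h
    simp only [sub_re, one_re, mul_re, neg_re, natCast_re] at this
    norm_num at this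
    linarith [n.cast_nonneg (α := ℝ)]
  have h2π : (2 * π : ℂ) ≠ 0 := by simp [Real.pi_ne_zero]
  have hfe := hurwitzZetaEven_one_sub a hs' (Or.inl ha)
  rw [sub_sub_cancel] at hfe
  rw [hfe, show π * (1 - 2 * s) / 2 = π / 2 - π * s by ring, cos_pi_div_two_sub]
  have hpow : (2 * π : ℂ) ^ (-2 * s) * (2 * π : ℂ) ^ (-(1 - 2 * s)) = ((2 * π : ℂ))⁻¹ := by
    rw [← cpow_add _ _ h2π, show -2 * s + -(1 - 2 * s) = (-1 : ℂ) by ring, cpow_neg_one]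
  calc _ = 2 * ((2 * π : ℂ) ^ (-2 * s) * (2 * π : ℂ) ^ (-(1 - 2 * s))) *
        Gamma (1 - 2 * s) * sin (π * s) * cosZeta a (1 - 2 * s) := by ring
    _ = _ := by
      rw [hpow]
      field_simp

lemma hasDerivAt_cpow_mul_hurwitzZetaEven_two_mul {a : UnitAddCircle} (ha : a ≠ 0) :
    HasDerivAt (fun s ↦ (2 * π : ℂ) ^ (-2 * s) * hurwitzZetaEven a (2 * s)) (cosZeta a 1) 0 := by
  have hGamma : DifferentiableAt ℂ (fun s : ℂ ↦ Gamma (1 - 2 * s)) 0 := by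
    refine (differentiableAt_Gamma _ fun m h ↦ ?_).comp 0 (by fun_prop)
    have := congrArg re h
    norm_num at this
    linarith [m.cast_nonneg (α := ℝ)]
  have hcosZeta : DifferentiableAt ℂ (fun s : ℂ ↦ cosZeta a (1 - 2 * s)) 0 :=
    (differentiableAt_cosZeta a (Or.inr ha)).comp 0 (by fun_prop)
  have hsin : HasDerivAt (fun s : ℂ ↦ sin (π * s)) π 0 := by
    simpa using ((hasDerivAt_id (0 : ℂ)).const_mul (π : ℂ)).csin
  have hprod := ((hGamma.mul hcosZeta).div_const (π : ℂ)).hasDerivAt.mul hsin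
  have hnear : ∀ᶠ s : ℂ in 𝓝 0, s.re < 1 / 2 :=
    (continuous_re.tendsto 0).eventually (gt_mem_nhds (by norm_num))
  refine (hprod.congr_of_eventuallyEq ?_).congr_deriv ?_
  · filter_upwards [hnear] with s hs using cpow_mul_hurwitzZetaEven_two_mul ha hs
  · simp [Real.pi_ne_zero]

end HurwitzZeta

/-- Analytic torsion of the circle: for `0 < ψ < 2π`, the zeta function
`Z(s) = 2·(2π)^{-2s}·(ζ(2s, ψ/2π) + ζ(2s, 1 − ψ/2π))` of the Laplacian on the flat
`O(2)`-bundle over `S¹` with holonomy angle `ψ` is differentiable at `s = 0`, the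
zeta-regularized determinant `exp(−Z′(0))` equals `(2 sin(ψ/2))⁴`, and the Ray–Singer
torsion `exp(−Z′(0))^{1/2}` equals `(2 sin(ψ/2))² = |e^{iψ} − 1|²`. -/
theorem analytic_torsion_circle (ψ : ℝ) (h0 : 0 < ψ) (h2π : ψ < 2 * Real.pi)
    (Z : ℂ → ℂ)
    (hZ : ∀ s : ℂ, Z s = 2 * (2 * Real.pi : ℂ) ^ (-2 * s) *
      (HurwitzZeta.hurwitzZeta ((ψ / (2 * Real.pi) : ℝ) : UnitAddCircle) (2 * s) +
        HurwitzZeta.hurwitzZeta ((1 - ψ / (2 * Real.pi) : ℝ) : UnitAddCircle) (2 * s))) :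
    DifferentiableAt ℂ Z 0 ∧
    Complex.exp (-(deriv Z 0)) = ((2 * Real.sin (ψ / 2)) ^ 4 : ℝ) ∧
    Complex.exp (-(deriv Z 0) / 2) = ((2 * Real.sin (ψ / 2)) ^ 2 : ℝ) ∧
    ((2 * Real.sin (ψ / 2)) ^ 2 : ℝ) =
      (‖Complex.exp (ψ * Complex.I) - 1‖) ^ 2 := by
  set a := ψ / (2 * π) with ha_def
  have ha : (a : UnitAddCircle) ≠ 0 := by
    have ha_mem : a ∈ Set.Ico 0 1 := ⟨by positivity, (div_lt_one (by positivity)).2 h2π⟩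
    rw [Ne, AddCircle.coe_eq_zero_iff_of_mem_Ico ha_mem]
    positivity
  have hZ_eq : Z = fun s ↦ 4 * ((2 * π : ℂ) ^ (-2 * s) * hurwitzZetaEven a (2 * s)) := by
    ext s
    rw [hZ, AddCircle.coe_sub, AddCircle.coe_period, zero_sub, hurwitzZeta_add_hurwitzZeta_neg]
    ring
  have hderiv : HasDerivAt Z (4 * cosZeta a 1) 0 :=
    hZ_eq ▸ (hasDerivAt_cpow_mul_hurwitzZetaEven_two_mul ha).const_mul 4
  have hsin : 0 < 2 * Real.sin (ψ / 2) := by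
    have := Real.sin_pos_of_pos_of_lt_pi (x := ψ / 2) (by positivity) (by linarith)
    positivity
  have hderiv_eq : -deriv Z 0 = ((4 : ℕ) * Real.log (2 * Real.sin (ψ / 2)) : ℝ) := by
    rw [hderiv.deriv, cosZeta_one ha, show π * a = ψ / 2 by rw [ha_def]; field_simp,
      abs_of_pos hsin]
    push_cast
    ring
  have hexp_log (n : ℕ) : cexp ((n * Real.log (2 * Real.sin (ψ / 2)) : ℝ)) =
      ((2 * Real.sin (ψ / 2)) ^ n : ℝ) := by
    rw [← Real.log_pow, ← ofReal_exp, Real.exp_log (by positivity)]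
  refine ⟨hderiv.differentiableAt, ?_, ?_, ?_⟩
  · rw [hderiv_eq, hexp_log]
  · rw [hderiv_eq, ← hexp_log]
    push_cast
    ring_nf
  · rw [mul_comm (ψ : ℂ), norm_exp_I_mul_ofReal_sub_one, Real.norm_eq_abs, sq_abs]
end

section
/- Construction of a Hodge-theoretic chain contraction: Let V be a finite-dimensional real inner product space and d : V → V linear with d ∘ d = 0; let d* be the adjoint of d, Δ = d∘d* + d*∘d, and let P be the orthogonal projection of V onto ker Δ. Then for every real number λ ≠ 0 the operator Δ + λ·P is invertible, and the operator κ := d* ∘ (Δ + λ·P)⁻¹ satisfies: d∘κ + κ∘d = id − P, κ∘κ = 0, κ∘P = 0, and P∘κ = 0. (In particular κ is independent of λ on the complement of ker Δ and provides a chain homotopy between the identity and the harmonic projection P.) -/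
local notation "⟪" x ", " y "⟫_ℝ" => @inner ℝ _ _ x y

/-- Construction of a Hodge-theoretic chain contraction: with `d∘d = 0`,
`Δ = d∘d* + d*∘d`, and `P` the orthogonal projection onto `ker Δ` (the self-adjoint
idempotent with range `ker Δ`), for every `λ ≠ 0` the operator `Δ + λ·P` is invertible
and `κ := d* ∘ (Δ + λ·P)⁻¹` satisfies `d∘κ + κ∘d = id − P`, `κ∘κ = 0`, `κ∘P = 0`,
`P∘κ = 0`. -/
theorem hodge_chain_contraction {V : Type*} [NormedAddCommGroup V] [InnerProductSpace ℝ V]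
    [FiniteDimensional ℝ V] (d : V →ₗ[ℝ] V) (hd : d ∘ₗ d = 0)
    (Δ : V →ₗ[ℝ] V) (hΔ : Δ = d ∘ₗ LinearMap.adjoint d + LinearMap.adjoint d ∘ₗ d)
    (P : V →ₗ[ℝ] V) (hP2 : P ∘ₗ P = P) (hPsa : LinearMap.adjoint P = P)
    (hPrange : LinearMap.range P = LinearMap.ker Δ)
    (lam : ℝ) (hlam : lam ≠ 0) :
    Function.Bijective (Δ + lam • P) ∧
    ∀ Q : V →ₗ[ℝ] V, (Δ + lam • P) ∘ₗ Q = LinearMap.id →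
      d ∘ₗ (LinearMap.adjoint d ∘ₗ Q) + (LinearMap.adjoint d ∘ₗ Q) ∘ₗ d
          = LinearMap.id - P ∧
      (LinearMap.adjoint d ∘ₗ Q) ∘ₗ (LinearMap.adjoint d ∘ₗ Q) = 0 ∧
      (LinearMap.adjoint d ∘ₗ Q) ∘ₗ P = 0 ∧
      P ∘ₗ (LinearMap.adjoint d ∘ₗ Q) = 0 := by
  set D := LinearMap.adjoint d with hD
  -- D ∘ D = 0
  have hDD : D ∘ₗ D = 0 := by
    rw [hD, ← LinearMap.adjoint_comp, hd]
    simp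
  -- kernel of Δ is contained in ker d ∩ ker D
  have hker : ∀ x : V, Δ x = 0 → d x = 0 ∧ D x = 0 := by
    intro x hx
    have h1 : ⟪D x, D x⟫_ℝ = ⟪x, d (D x)⟫_ℝ := LinearMap.adjoint_inner_left d (D x) x
    have h2 : ⟪d x, d x⟫_ℝ = ⟪D (d x), x⟫_ℝ := by
      rw [LinearMap.adjoint_inner_left d x (d x), real_inner_comm]
    have h0 : ⟪D x, D x⟫_ℝ + ⟪d x, d x⟫_ℝ = 0 := by
      have := congrArg (fun y => ⟪x, y⟫_ℝ) hx
      simp only [hΔ, LinearMap.add_apply, LinearMap.comp_apply, inner_add_right,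
        inner_zero_right] at this
      rw [h1, h2, real_inner_comm x (D (d x))]
      exact this
    have hn1 : (0:ℝ) ≤ ⟪D x, D x⟫_ℝ := real_inner_self_nonneg
    have hn2 : (0:ℝ) ≤ ⟪d x, d x⟫_ℝ := real_inner_self_nonneg
    constructor
    · have : ⟪d x, d x⟫_ℝ = 0 := by linarith
      exact inner_self_eq_zero.mp this
    · have : ⟪D x, D x⟫_ℝ = 0 := by linarith
      exact inner_self_eq_zero.mp this
  -- compositions with P
  have hdP : d ∘ₗ P = 0 := by
    ext x
    have : Δ (P x) = 0 := by
      have : P x ∈ LinearMap.ker Δ := hPrange ▸ LinearMap.mem_range_self P x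
      exact this
    simpa using (hker (P x) this).1
  have hDP : D ∘ₗ P = 0 := by
    ext x
    have : Δ (P x) = 0 := by
      have : P x ∈ LinearMap.ker Δ := hPrange ▸ LinearMap.mem_range_self P x
      exact this
    simpa using (hker (P x) this).2
  have hPd : P ∘ₗ d = 0 := by
    have h := congrArg LinearMap.adjoint hDP
    rw [LinearMap.adjoint_comp, hPsa, hD, LinearMap.adjoint_adjoint] at h
    simpa using h
  have hPD : P ∘ₗ D = 0 := by
    have h := congrArg LinearMap.adjoint hdP
    rw [LinearMap.adjoint_comp, hPsa] at h
    rw [hD]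
    simpa using h
  have hΔP : Δ ∘ₗ P = 0 := by
    rw [hΔ, LinearMap.add_comp, LinearMap.comp_assoc, LinearMap.comp_assoc, hdP, hDP]
    simp
  have hPΔ : P ∘ₗ Δ = 0 := by
    rw [hΔ, LinearMap.comp_add, ← LinearMap.comp_assoc, ← LinearMap.comp_assoc, hPd, hPD]
    simp
  -- injectivity of M := Δ + lam • P
  have hinj : Function.Injective (Δ + lam • P) := by
    rw [← LinearMap.ker_eq_bot, LinearMap.ker_eq_bot']
    intro x hx
    simp only [LinearMap.add_apply, LinearMap.smul_apply] at hx
    have hPx : P x = 0 := by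
      have := congrArg P hx
      have hc : P (Δ x) + lam • P (P x) = 0 := by simpa using this
      have h1 : P (Δ x) = 0 := by
        have := congrArg (fun f => f x) hPΔ; simpa using this
      have h2 : P (P x) = P x := by
        have := congrArg (fun f => f x) hP2; simpa using this
      rw [h1, h2, zero_add] at hc
      exact (smul_eq_zero.mp hc).resolve_left hlam
    have hΔx : Δ x = 0 := by rw [hPx, smul_zero, add_zero] at hx; exact hx
    have : x ∈ LinearMap.range P := hPrange ▸ hΔx
    obtain ⟨y, hy⟩ := this
    have : P x = x := by
      rw [← hy]
      have := congrArg (fun f => f y) hP2; simpa using this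
    rw [← this, hPx]
  have hbij : Function.Bijective (Δ + lam • P) :=
    ⟨hinj, LinearMap.injective_iff_surjective.mp hinj⟩
  refine ⟨hbij, ?_⟩
  intro Q hQ
  set M := Δ + lam • P with hM
  -- left inverse
  have hQ' : Q ∘ₗ M = LinearMap.id := by
    have h : M ∘ₗ (Q ∘ₗ M) = M ∘ₗ LinearMap.id := by
      rw [← LinearMap.comp_assoc, hQ, LinearMap.id_comp, LinearMap.comp_id]
    ext x
    exact hinj (congrArg (fun f => f x) h)
  -- P ∘ Q and Q ∘ P
  have hPM : P ∘ₗ M = lam • P := by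
    rw [hM, LinearMap.comp_add, hPΔ, zero_add, LinearMap.comp_smul, hP2]
  have hMP : M ∘ₗ P = lam • P := by
    rw [hM, LinearMap.add_comp, hΔP, zero_add, LinearMap.smul_comp, hP2]
  have hPQ : P ∘ₗ Q = lam⁻¹ • P := by
    have h : lam • (P ∘ₗ Q) = P := by
      rw [← LinearMap.smul_comp, ← hPM, LinearMap.comp_assoc, hQ, LinearMap.comp_id]
    calc P ∘ₗ Q = lam⁻¹ • (lam • (P ∘ₗ Q)) := by
          rw [smul_smul, inv_mul_cancel₀ hlam, one_smul]
      _ = lam⁻¹ • P := by rw [h]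
  have hQP : Q ∘ₗ P = lam⁻¹ • P := by
    have h : lam • (Q ∘ₗ P) = P := by
      rw [← LinearMap.comp_smul, ← hMP, ← LinearMap.comp_assoc, hQ', LinearMap.id_comp]
    calc Q ∘ₗ P = lam⁻¹ • (lam • (Q ∘ₗ P)) := by
          rw [smul_smul, inv_mul_cancel₀ hlam, one_smul]
      _ = lam⁻¹ • P := by rw [h]
  have hd0 : ∀ x, d (d x) = 0 := fun x => by
    have := congrArg (fun f => f x) hd; simpa using this
  have hDD0 : ∀ x, D (D x) = 0 := fun x => by
    have := congrArg (fun f => f x) hDD; simpa using this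
  -- commutation of d and D with M
  have hdΔ : d ∘ₗ Δ = Δ ∘ₗ d := by
    ext x; simp [hΔ, hd0]
  have hDΔ : D ∘ₗ Δ = Δ ∘ₗ D := by
    ext x; simp [hΔ, hDD0]
  have hdM : d ∘ₗ M = M ∘ₗ d := by
    rw [hM, LinearMap.comp_add, LinearMap.add_comp, hdΔ, LinearMap.comp_smul,
      LinearMap.smul_comp, hdP, hPd]
  have hDM : D ∘ₗ M = M ∘ₗ D := by
    rw [hM, LinearMap.comp_add, LinearMap.add_comp, hDΔ, LinearMap.comp_smul,
      LinearMap.smul_comp, hDP, hPD]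
  -- commutation of d and D with Q
  have hQd : Q ∘ₗ d = d ∘ₗ Q := by
    have h : M ∘ₗ (Q ∘ₗ d) = M ∘ₗ (d ∘ₗ Q) := by
      rw [← LinearMap.comp_assoc, hQ, LinearMap.id_comp, ← LinearMap.comp_assoc, ← hdM,
        LinearMap.comp_assoc, hQ, LinearMap.comp_id]
    ext x
    exact hinj (congrArg (fun f => f x) h)
  have hQD : Q ∘ₗ D = D ∘ₗ Q := by
    have h : M ∘ₗ (Q ∘ₗ D) = M ∘ₗ (D ∘ₗ Q) := by
      rw [← LinearMap.comp_assoc, hQ, LinearMap.id_comp, ← LinearMap.comp_assoc, ← hDM,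
        LinearMap.comp_assoc, hQ, LinearMap.comp_id]
    ext x
    exact hinj (congrArg (fun f => f x) h)
  refine ⟨?_, ?_, ?_, ?_⟩
  · -- d∘(D∘Q) + (D∘Q)∘d = id - P
    have h1 : (D ∘ₗ Q) ∘ₗ d = (D ∘ₗ d) ∘ₗ Q := by
      rw [LinearMap.comp_assoc, hQd, ← LinearMap.comp_assoc]
    have h2 : d ∘ₗ (D ∘ₗ Q) = (d ∘ₗ D) ∘ₗ Q := (LinearMap.comp_assoc _ _ _).symm
    rw [h1, h2, ← LinearMap.add_comp, ← hΔ]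
    have h3 : Δ ∘ₗ Q = LinearMap.id - lam • (P ∘ₗ Q) := by
      have : (Δ + lam • P) ∘ₗ Q = Δ ∘ₗ Q + lam • (P ∘ₗ Q) := by
        rw [LinearMap.add_comp, LinearMap.smul_comp]
      rw [this] at hQ
      rw [← hQ]; abel
    rw [h3, hPQ, smul_smul, mul_inv_cancel₀ hlam, one_smul]
  · -- κ∘κ = 0
    ext x
    simp only [LinearMap.comp_apply, LinearMap.zero_apply]
    have h := congrArg (fun f => f (Q x)) hQD
    simp only [LinearMap.comp_apply] at h
    rw [h, hDD0]
  · -- κ∘P = 0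
    rw [LinearMap.comp_assoc, hQP, LinearMap.comp_smul, hDP, smul_zero]
  · -- P∘κ = 0
    rw [← LinearMap.comp_assoc, hPD, LinearMap.zero_comp]
end
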